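/- arXiv:2602.07390 — 3 statements merged into one kernel-verified Lean document; each statement's English description precedes it below -/
import Mathlib

section
/- Under the stratified randomized survey experiment, the random vector √n·(τ̂−τ, τ̂_X^T, δ̂_W^T)^T has expectation zero and covariance matrix V = Σ_{k=1}^K Π_{[k]}² π_{[k]}^{-1} V_{[k]}, where V_{[k]} is the symmetric block matrix whose (1,1) entry is e_{[k]1}^{-1}S²_{[k]1}+e_{[k]0}^{-1}S²_{[k]0}−f_{[k]}S²_{[k]τ}, whose (1,2) block is e_{[k]1}^{-1}S_{[k]1,X}+e_{[k]0}^{-1}S_{[k]0,X}, whose (1,3) block is (1−f_{[k]})S_{[k]τ,W}, whose (2,2) block is (e_{[k]1}e_{[k]0})^{-1}S²_{[k]X}, whose (2,3) block is the zero matrix, and whose (3,3) block is (1−f_{[k]})S²_{[k]W}. -/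
open MeasureTheory ProbabilityTheory Filter Matrix
open scoped ENNReal NNReal

noncomputable section

namespace SurveyExperiments

/-- The uniform probability measure on a finite set of outcomes. -/
def unif {α : Type*} [MeasurableSpace α] (s : Finset α) : Measure α :=
  (s.card : ℝ≥0∞)⁻¹ • ∑ a ∈ s, MeasureTheory.Measure.dirac a

/-- The covariance of two real-valued random variables. -/
def covRV {Ω : Type*} [MeasurableSpace Ω] (μ : Measure Ω) (f g : Ω → ℝ) : ℝ :=
  ∫ ω, (f ω - ∫ x, f x ∂μ) * (g ω - ∫ x, g x ∂μ) ∂μ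

/-- The total variation distance between two measures. -/
def dTV {α : Type*} [MeasurableSpace α] (P Q : Measure α) : ℝ :=
  ⨆ A : Set α, |(P A).toReal - (Q A).toReal|

/-- The standard Gaussian measure on `ℝ^J`. -/
def stdGaussianPi (J : ℕ) : Measure (Fin J → ℝ) := Measure.pi fun _ => gaussianReal 0 1

/-- The law `L_{J,a}` of the first coordinate of a standard Gaussian vector in `ℝ^J`
conditioned on the event that its squared norm is at most `a`. -/
def truncGaussian (J : ℕ) [NeZero J] (a : ℝ) : Measure ℝ :=
  Measure.map (fun x => x 0)
    (ProbabilityTheory.cond (stdGaussianPi J) {x | ∑ i, (x i) ^ 2 ≤ a})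

/-- `ν_{J,a}`, the variance of the truncated Gaussian `L_{J,a}`. -/
def nu (J : ℕ) [NeZero J] (a : ℝ) : ℝ := variance id (truncGaussian J a)

/-- The law of `√v (√(1-rW-rX) ε + √rW L_{J1,aS} + √rX L_{J2,aT})` with independent
`ε ~ N(0,1)`, `L_{J1,aS}`, `L_{J2,aT}`. -/
def rrLimitLaw (v rW rX : ℝ) (J1 J2 : ℕ) [NeZero J1] [NeZero J2] (aS aT : ℝ) : Measure ℝ :=
  Measure.map
    (fun p : ℝ × ℝ × ℝ =>
      Real.sqrt v * (Real.sqrt (1 - rW - rX) * p.1 + Real.sqrt rW * p.2.1 + Real.sqrt rX * p.2.2))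
    ((gaussianReal 0 1).prod ((truncGaussian J1 aS).prod (truncGaussian J2 aT)))

/-- The `p`-th quantile of a measure on `ℝ`. -/
def quantile (μ : Measure ℝ) (p : ℝ) : ℝ := sInf {x : ℝ | ENNReal.ofReal p ≤ μ (Set.Iic x)}

/-- The data of a stratified (randomized survey) experiment: a population of `N` units
partitioned into `K` strata by `st`, with `nk k` units sampled and `nk1 k` sampled units
treated in stratum `k`. -/
structure SRSE where
  K : ℕ
  N : ℕ
  st : Fin N → Fin K
  nk : Fin K → ℕ
  nk1 : Fin K → ℕ

namespace SRSE

variable (E : SRSE)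

def stratum (k : Fin E.K) : Finset (Fin E.N) := Finset.univ.filter fun i => E.st i = k
def Nk (k : Fin E.K) : ℕ := (E.stratum k).card
def nk0 (k : Fin E.K) : ℕ := E.nk k - E.nk1 k
def n : ℕ := ∑ k, E.nk k
def Pi (k : Fin E.K) : ℝ := (E.Nk k : ℝ) / (E.N : ℝ)
def pik (k : Fin E.K) : ℝ := (E.nk k : ℝ) / (E.n : ℝ)
def fk (k : Fin E.K) : ℝ := (E.nk k : ℝ) / (E.Nk k : ℝ)
def f : ℝ := (E.n : ℝ) / (E.N : ℝ)
def e1 (k : Fin E.K) : ℝ := (E.nk1 k : ℝ) / (E.nk k : ℝ)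
def e0 (k : Fin E.K) : ℝ := (E.nk0 k : ℝ) / (E.nk k : ℝ)

/-- Sample space: a pair of sampling indicators and treatment indicators. -/
abbrev Omega := (Fin E.N → Bool) × (Fin E.N → Bool)

/-- The attainable pairs of indicators: `nk k` sampled and `nk1 k` treated units in each
stratum `k`, with treated units sampled. -/
def valid : Finset E.Omega :=
  Finset.univ.filter fun ω =>
    (∀ k, ((E.stratum k).filter fun i => ω.1 i = true).card = E.nk k) ∧
    (∀ k, ((E.stratum k).filter fun i => ω.1 i = true ∧ ω.2 i = true).card = E.nk1 k) ∧
    (∀ i, ω.2 i = true → ω.1 i = true)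

/-- The stratified randomized survey experiment (SRSE) design: stratified random sampling
without replacement followed by stratified randomization, i.e. the uniform distribution over
all attainable pairs of indicator vectors. -/
def P : Measure E.Omega := unif E.valid

def Z (ω : E.Omega) (i : Fin E.N) : ℝ := if ω.1 i then 1 else 0
def T (ω : E.Omega) (i : Fin E.N) : ℝ := if ω.2 i then 1 else 0

def meanK (a : Fin E.N → ℝ) (k : Fin E.K) : ℝ := (∑ i ∈ E.stratum k, a i) / (E.Nk k : ℝ)
def covK (a b : Fin E.N → ℝ) (k : Fin E.K) : ℝ :=
  (∑ i ∈ E.stratum k, (a i - E.meanK a k) * (b i - E.meanK b k)) / ((E.Nk k : ℝ) - 1)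
def meanAll (a : Fin E.N → ℝ) : ℝ := (∑ i, a i) / (E.N : ℝ)
def varAll (a : Fin E.N → ℝ) : ℝ := (∑ i, (a i - E.meanAll a) ^ 2) / ((E.N : ℝ) - 1)

def mean1 (a : Fin E.N → ℝ) (k : Fin E.K) (ω : E.Omega) : ℝ :=
  (∑ i ∈ E.stratum k, E.Z ω i * E.T ω i * a i) / (E.nk1 k : ℝ)
def mean0 (a : Fin E.N → ℝ) (k : Fin E.K) (ω : E.Omega) : ℝ :=
  (∑ i ∈ E.stratum k, E.Z ω i * (1 - E.T ω i) * a i) / (E.nk0 k : ℝ)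
def meanS (a : Fin E.N → ℝ) (k : Fin E.K) (ω : E.Omega) : ℝ :=
  (∑ i ∈ E.stratum k, E.Z ω i * a i) / (E.nk k : ℝ)

/-- The stratified difference-in-means estimator. -/
def hatTau (Y1 Y0 : Fin E.N → ℝ) (ω : E.Omega) : ℝ :=
  ∑ k, E.Pi k * (E.mean1 Y1 k ω - E.mean0 Y0 k ω)
/-- The finite-population average treatment effect. -/
def tau (Y1 Y0 : Fin E.N → ℝ) : ℝ := ∑ k, E.Pi k * (E.meanK Y1 k - E.meanK Y0 k)
/-- The treated/control covariate-mean-difference `τ̂_X`. -/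
def hatTauX {J : ℕ} (X : Fin E.N → Fin J → ℝ) (ω : E.Omega) : Fin J → ℝ := fun j =>
  ∑ k, E.Pi k * (E.mean1 (fun i => X i j) k ω - E.mean0 (fun i => X i j) k ω)
/-- The sampled/population covariate-mean-difference `δ̂_W`. -/
def hatDeltaW {J : ℕ} (W : Fin E.N → Fin J → ℝ) (ω : E.Omega) : Fin J → ℝ := fun j =>
  ∑ k, E.Pi k * (E.meanS (fun i => W i j) k ω - E.meanK (fun i => W i j) k)

def sCov1 (a b : Fin E.N → ℝ) (k : Fin E.K) (ω : E.Omega) : ℝ :=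
  (∑ i ∈ E.stratum k, E.Z ω i * E.T ω i * (a i - E.mean1 a k ω) * (b i - E.mean1 b k ω)) /
    ((E.nk1 k : ℝ) - 1)
def sCov0 (a b : Fin E.N → ℝ) (k : Fin E.K) (ω : E.Omega) : ℝ :=
  (∑ i ∈ E.stratum k, E.Z ω i * (1 - E.T ω i) * (a i - E.mean0 a k ω) * (b i - E.mean0 b k ω)) /
    ((E.nk0 k : ℝ) - 1)
def sCovS (a b : Fin E.N → ℝ) (k : Fin E.K) (ω : E.Omega) : ℝ :=
  (∑ i ∈ E.stratum k, E.Z ω i * (a i - E.meanS a k ω) * (b i - E.meanS b k ω)) /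
    ((E.nk k : ℝ) - 1)

/-- The `(τ,τ)` entry of the covariance matrix `V`. -/
def Vtt (Y1 Y0 : Fin E.N → ℝ) : ℝ :=
  ∑ k, (E.Pi k) ^ 2 / E.pik k *
    (E.covK Y1 Y1 k / E.e1 k + E.covK Y0 Y0 k / E.e0 k -
      E.fk k * E.covK (fun i => Y1 i - Y0 i) (fun i => Y1 i - Y0 i) k)
/-- The `(τ,X)` block of `V`. -/
def VtX {J : ℕ} (Y1 Y0 : Fin E.N → ℝ) (X : Fin E.N → Fin J → ℝ) : Fin J → ℝ := fun j =>
  ∑ k, (E.Pi k) ^ 2 / E.pik k *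
    (E.covK (fun i => X i j) Y1 k / E.e1 k + E.covK (fun i => X i j) Y0 k / E.e0 k)
/-- The `(τ,W)` block of `V`. -/
def VtW {J : ℕ} (Y1 Y0 : Fin E.N → ℝ) (W : Fin E.N → Fin J → ℝ) : Fin J → ℝ := fun j =>
  ∑ k, (E.Pi k) ^ 2 / E.pik k *
    ((1 - E.fk k) * E.covK (fun i => W i j) (fun i => Y1 i - Y0 i) k)
/-- The `(X,X)` block of `V`. -/
def VXX {J : ℕ} (X : Fin E.N → Fin J → ℝ) : Matrix (Fin J) (Fin J) ℝ :=
  Matrix.of fun j j' =>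
    ∑ k, (E.Pi k) ^ 2 / E.pik k *
      (E.covK (fun i => X i j) (fun i => X i j') k / (E.e1 k * E.e0 k))
/-- The `(W,W)` block of `V`. -/
def VWW {J : ℕ} (W : Fin E.N → Fin J → ℝ) : Matrix (Fin J) (Fin J) ℝ :=
  Matrix.of fun j j' =>
    ∑ k, (E.Pi k) ^ 2 / E.pik k *
      ((1 - E.fk k) * E.covK (fun i => W i j) (fun i => W i j') k)

/-- The covariance matrix of `δ̂_W` under stratified random sampling. -/
def covWSampling {J : ℕ} (W : Fin E.N → Fin J → ℝ) : Matrix (Fin J) (Fin J) ℝ :=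
  Matrix.of fun j j' =>
    ∑ k, (E.Pi k) ^ 2 * ((E.nk k : ℝ)⁻¹ - (E.Nk k : ℝ)⁻¹) *
      E.covK (fun i => W i j) (fun i => W i j') k
/-- The Mahalanobis sampling-balance criterion `M_S`. -/
def MS {J : ℕ} (W : Fin E.N → Fin J → ℝ) (ω : E.Omega) : ℝ :=
  E.hatDeltaW W ω ⬝ᵥ ((E.covWSampling W)⁻¹ *ᵥ E.hatDeltaW W ω)
/-- The conditional covariance matrix of `τ̂_X` given the sample. -/
def covXAssign {J : ℕ} (X : Fin E.N → Fin J → ℝ) (ω : E.Omega) : Matrix (Fin J) (Fin J) ℝ :=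
  Matrix.of fun j j' =>
    ∑ k, (E.Pi k) ^ 2 * ((E.nk k : ℝ) / ((E.nk1 k : ℝ) * (E.nk0 k : ℝ))) *
      E.sCovS (fun i => X i j) (fun i => X i j') k ω
/-- The Mahalanobis assignment-balance criterion `M_T`. -/
def MT {J : ℕ} (X : Fin E.N → Fin J → ℝ) (ω : E.Omega) : ℝ :=
  E.hatTauX X ω ⬝ᵥ ((E.covXAssign X ω)⁻¹ *ᵥ E.hatTauX X ω)
/-- The acceptance event `{M_S ≤ a_S, M_T ≤ a_T}`. -/
def accept {J1 J2 : ℕ} (W : Fin E.N → Fin J1 → ℝ) (X : Fin E.N → Fin J2 → ℝ) (aS aT : ℝ) :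
    Set E.Omega := {ω | E.MS W ω ≤ aS ∧ E.MT X ω ≤ aT}

/-- The SRSRR design: the SRSE design conditioned on acceptance of both balance criteria. -/
def Prr {J1 J2 : ℕ} (W : Fin E.N → Fin J1 → ℝ) (X : Fin E.N → Fin J2 → ℝ) (aS aT : ℝ) :
    Measure E.Omega := ProbabilityTheory.cond E.P (E.accept W X aS aT)

/-- The conservative variance estimator `V̂_ττ`. -/
def hatVtt (Y1 Y0 : Fin E.N → ℝ) (ω : E.Omega) : ℝ :=
  ∑ k, (E.Pi k) ^ 2 / E.pik k * (E.sCov1 Y1 Y1 k ω / E.e1 k + E.sCov0 Y0 Y0 k ω / E.e0 k)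
/-- The estimator `V̂_τX`. -/
def hatVtX {J : ℕ} (Y1 Y0 : Fin E.N → ℝ) (X : Fin E.N → Fin J → ℝ) (ω : E.Omega) : Fin J → ℝ :=
  fun j => ∑ k, (E.Pi k) ^ 2 / E.pik k *
    (E.sCov1 (fun i => X i j) Y1 k ω / E.e1 k + E.sCov0 (fun i => X i j) Y0 k ω / E.e0 k)
/-- The estimator `V̂_τW`. -/
def hatVtW {J : ℕ} (Y1 Y0 : Fin E.N → ℝ) (W : Fin E.N → Fin J → ℝ) (ω : E.Omega) : Fin J → ℝ :=
  fun j => ∑ k, (E.Pi k) ^ 2 / E.pik k *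
    ((1 - E.fk k) * (E.sCov1 (fun i => W i j) Y1 k ω - E.sCov0 (fun i => W i j) Y0 k ω))
/-- The estimator `V̂_XX`. -/
def hatVXX {J : ℕ} (X : Fin E.N → Fin J → ℝ) (ω : E.Omega) : Matrix (Fin J) (Fin J) ℝ :=
  Matrix.of fun j j' => ∑ k, (E.Pi k) ^ 2 / E.pik k *
    (E.sCovS (fun i => X i j) (fun i => X i j') k ω / (E.e1 k * E.e0 k))
/-- The plug-in estimator `R̂²_W` (also used for `R̂²_E` with analysis-stage covariates). -/
def hatRW2 {J : ℕ} (Y1 Y0 : Fin E.N → ℝ) (W : Fin E.N → Fin J → ℝ) (ω : E.Omega) : ℝ :=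
  (E.hatVtW Y1 Y0 W ω ⬝ᵥ ((E.VWW W)⁻¹ *ᵥ E.hatVtW Y1 Y0 W ω)) / E.hatVtt Y1 Y0 ω
/-- The plug-in estimator `R̂²_X` (also used for `R̂²_C` with analysis-stage covariates). -/
def hatRX2 {J : ℕ} (Y1 Y0 : Fin E.N → ℝ) (X : Fin E.N → Fin J → ℝ) (ω : E.Omega) : ℝ :=
  (E.hatVtX Y1 Y0 X ω ⬝ᵥ ((E.hatVXX X ω)⁻¹ *ᵥ E.hatVtX Y1 Y0 X ω)) / E.hatVtt Y1 Y0 ω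

/-- The estimated regression-adjustment coefficient `β̂`. -/
def hatBeta {J : ℕ} (Y1 Y0 : Fin E.N → ℝ) (C : Fin E.N → Fin J → ℝ) (ω : E.Omega) : Fin J → ℝ :=
  (E.hatVXX C ω)⁻¹ *ᵥ E.hatVtX Y1 Y0 C ω
/-- The estimated regression-adjustment coefficient `γ̂`. -/
def hatGamma {J : ℕ} (Y1 Y0 : Fin E.N → ℝ) (Ecov : Fin E.N → Fin J → ℝ) (ω : E.Omega) :
    Fin J → ℝ :=
  (E.VWW Ecov)⁻¹ *ᵥ E.hatVtW Y1 Y0 Ecov ω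
/-- The regression-adjusted estimator `τ̂_adj = τ̂ - β̂ᵀτ̂_C - γ̂ᵀδ̂_E`. -/
def hatTauAdj {J3 J4 : ℕ} (Y1 Y0 : Fin E.N → ℝ) (C : Fin E.N → Fin J4 → ℝ)
    (Ecov : Fin E.N → Fin J3 → ℝ) (ω : E.Omega) : ℝ :=
  E.hatTau Y1 Y0 ω - E.hatBeta Y1 Y0 C ω ⬝ᵥ E.hatTauX C ω -
    E.hatGamma Y1 Y0 Ecov ω ⬝ᵥ E.hatDeltaW Ecov ω

/-- The vector stratified difference-in-means estimator `τ̂_R`. -/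
def hatTauVec {d : ℕ} (R1 R0 : Fin E.N → Fin d → ℝ) (ω : E.Omega) : Fin d → ℝ := fun j =>
  ∑ k, E.Pi k * (E.mean1 (fun i => R1 i j) k ω - E.mean0 (fun i => R0 i j) k ω)
/-- The vector estimand `τ_R`. -/
def tauVec {d : ℕ} (R1 R0 : Fin E.N → Fin d → ℝ) : Fin d → ℝ := fun j =>
  ∑ k, E.Pi k * (E.meanK (fun i => R1 i j) k - E.meanK (fun i => R0 i j) k)
/-- The covariance matrix `V_R` of `√n (τ̂_R - τ_R)`. -/
def VRmat {d : ℕ} (R1 R0 : Fin E.N → Fin d → ℝ) : Matrix (Fin d) (Fin d) ℝ :=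
  Matrix.of fun j j' =>
    ∑ k, (E.Pi k) ^ 2 / E.pik k *
      (E.covK (fun i => R1 i j) (fun i => R1 i j') k / E.e1 k +
        E.covK (fun i => R0 i j) (fun i => R0 i j') k / E.e0 k -
        E.fk k * E.covK (fun i => R1 i j - R0 i j) (fun i => R1 i j' - R0 i j') k)

/-- The attainable sampling vectors. -/
def validZ : Finset (Fin E.N → Bool) :=
  Finset.univ.filter fun z => ∀ k, ((E.stratum k).filter fun i => z i = true).card = E.nk k
/-- Stratified random sampling without replacement: the uniform distribution over attainable
sampling vectors. -/
def Psamp : Measure (Fin E.N → Bool) := unif E.validZ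
/-- `δ̂_W` as a function of the sampling vector alone. -/
def deltaWz {J : ℕ} (W : Fin E.N → Fin J → ℝ) (z : Fin E.N → Bool) : Fin J → ℝ := fun j =>
  ∑ k, E.Pi k *
    ((∑ i ∈ E.stratum k, (if z i then (1 : ℝ) else 0) * W i j) / (E.nk k : ℝ) -
      E.meanK (fun i => W i j) k)

/-- The attainable treatment-assignment vectors given the sampling vector `z`. -/
def validT (z : Fin E.N → Bool) : Finset (Fin E.N → Bool) :=
  Finset.univ.filter fun t =>
    (∀ k, ((E.stratum k).filter fun i => z i = true ∧ t i = true).card = E.nk1 k) ∧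
    (∀ i, t i = true → z i = true)
/-- Stratified randomization of the sampled units, conditionally on the sampling vector `z`. -/
def Pgiven (z : Fin E.N → Bool) : Measure E.Omega :=
  unif ((E.validT z).image fun t => (z, t))

/-- `M_S` as a function of the sampling vector alone. -/
def MSz {J : ℕ} (W : Fin E.N → Fin J → ℝ) (z : Fin E.N → Bool) : ℝ := E.MS W (z, z)
/-- The acceptable sampling vectors. -/
def acceptZ {J : ℕ} (W : Fin E.N → Fin J → ℝ) (aS : ℝ) : Finset (Fin E.N → Bool) :=
  E.validZ.filter fun z => E.MSz W z ≤ aS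
/-- The acceptable assignment vectors given a sampling vector `z`. -/
def acceptT {J : ℕ} (X : Fin E.N → Fin J → ℝ) (aT : ℝ) (z : Fin E.N → Bool) :
    Finset (Fin E.N → Bool) := (E.validT z).filter fun t => E.MT X (z, t) ≤ aT
/-- The set `M` of jointly acceptable pairs. -/
def acceptedPairs {J1 J2 : ℕ} (W : Fin E.N → Fin J1 → ℝ) (X : Fin E.N → Fin J2 → ℝ)
    (aS aT : ℝ) : Finset E.Omega :=
  E.valid.filter fun ω => E.MS W ω ≤ aS ∧ E.MT X ω ≤ aT
/-- The single-stage rejective design: uniform over jointly acceptable pairs. -/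
def singleStage {J1 J2 : ℕ} (W : Fin E.N → Fin J1 → ℝ) (X : Fin E.N → Fin J2 → ℝ)
    (aS aT : ℝ) : Measure E.Omega := unif (E.acceptedPairs W X aS aT)
/-- The two-stage rejective design: first a uniform acceptable sampling, then a uniform
acceptable assignment given the sampling. -/
def twoStage {J1 J2 : ℕ} (W : Fin E.N → Fin J1 → ℝ) (X : Fin E.N → Fin J2 → ℝ) (aS aT : ℝ) :
    Measure E.Omega :=
  ((E.acceptZ W aS).card : ℝ≥0∞)⁻¹ • ∑ z ∈ E.acceptZ W aS,
    (((E.acceptT X aT z).card : ℝ≥0∞)⁻¹ • ∑ t ∈ E.acceptT X aT z, Measure.dirac (z, t))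
/-- The conditional acceptance probability `P(M_T ≤ a_T ∣ Z = z)`. -/
def condAcceptProb {J : ℕ} (X : Fin E.N → Fin J → ℝ) (aT : ℝ) (z : Fin E.N → Bool) : ℝ :=
  ((E.acceptT X aT z).card : ℝ) / ((E.validT z).card : ℝ)

end SRSE


/-! ### Auxiliary development for statement0 -/

section Statement0Aux

theorem integrable_dirac' {α : Type*} [MeasurableSpace α] [MeasurableSingletonClass α]
    [Countable α] (f : α → ℝ) (a : α) : Integrable f (Measure.dirac a) := by
  refine ⟨(measurable_of_countable f).aestronglyMeasurable, ?_⟩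
  rw [HasFiniteIntegral, lintegral_dirac]
  exact ENNReal.coe_lt_top

theorem integral_unif' {α : Type*} [MeasurableSpace α] [MeasurableSingletonClass α]
    [Countable α] (s : Finset α) (f : α → ℝ) :
    ∫ x, f x ∂(unif s) = (s.card : ℝ)⁻¹ * ∑ a ∈ s, f a := by
  rw [unif, integral_smul_measure,
    integral_finset_sum_measure (fun i _ => integrable_dirac' f i)]
  simp [integral_dirac, ENNReal.toReal_inv, smul_eq_mul]

/-- The three kinds of per-unit indicators in a stratified survey experiment. -/
inductive Arm | t1 | t0 | samp

namespace SRSE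

variable (E : SRSE)

/-- The indicator function of an arm. -/
def ia : Arm → E.Omega → Fin E.N → ℝ
  | .t1 => fun ω i => E.Z ω i * E.T ω i
  | .t0 => fun ω i => E.Z ω i * (1 - E.T ω i)
  | .samp => fun ω i => E.Z ω i

/-- Number of units in stratum `k` carrying the indicator of an arm. -/
def ac : Arm → Fin E.K → ℝ
  | .t1 => fun k => (E.nk1 k : ℝ)
  | .t0 => fun k => (E.nk0 k : ℝ)
  | .samp => fun k => (E.nk k : ℝ)

/-- Number of units in stratum `k` carrying both indicators of two arms. -/
def ad : Arm → Arm → Fin E.K → ℝ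
  | .t1, .t1 => fun k => (E.nk1 k : ℝ)
  | .t1, .t0 => fun _ => 0
  | .t1, .samp => fun k => (E.nk1 k : ℝ)
  | .t0, .t1 => fun _ => 0
  | .t0, .t0 => fun k => (E.nk0 k : ℝ)
  | .t0, .samp => fun k => (E.nk0 k : ℝ)
  | .samp, .t1 => fun k => (E.nk1 k : ℝ)
  | .samp, .t0 => fun k => (E.nk0 k : ℝ)
  | .samp, .samp => fun k => (E.nk k : ℝ)

/-- The covariance factor of two arms in a stratum. -/
def lam (α β : Arm) (k : Fin E.K) : ℝ :=
  (E.ad α β k * (E.Nk k : ℝ) - E.ac α k * E.ac β k) / (E.ac α k * E.ac β k * (E.Nk k : ℝ))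

/-- The sample mean of `a` over the units of stratum `k` carrying an arm's indicator. -/
def mA (α : Arm) (a : Fin E.N → ℝ) (k : Fin E.K) (ω : E.Omega) : ℝ :=
  (∑ i ∈ E.stratum k, E.ia α ω i * a i) / E.ac α k

lemma mean1_eq_mA (a : Fin E.N → ℝ) (k : Fin E.K) (ω : E.Omega) :
    E.mean1 a k ω = E.mA .t1 a k ω := rfl

lemma mean0_eq_mA (a : Fin E.N → ℝ) (k : Fin E.K) (ω : E.Omega) :
    E.mean0 a k ω = E.mA .t0 a k ω := rfl

lemma meanS_eq_mA (a : Fin E.N → ℝ) (k : Fin E.K) (ω : E.Omega) :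
    E.meanS a k ω = E.mA .samp a k ω := rfl

lemma mem_stratum {i : Fin E.N} {k : Fin E.K} : i ∈ E.stratum k ↔ E.st i = k := by
  simp [stratum]

lemma card_stratum (k : Fin E.K) : (E.stratum k).card = E.Nk k := rfl

lemma mem_valid {ω : E.Omega} : ω ∈ E.valid ↔
    (∀ k, ((E.stratum k).filter fun i => ω.1 i = true).card = E.nk k) ∧
    (∀ k, ((E.stratum k).filter fun i => ω.1 i = true ∧ ω.2 i = true).card = E.nk1 k) ∧
    (∀ i, ω.2 i = true → ω.1 i = true) := by
  simp [valid]

/-- On an attainable configuration, the indicator of any arm sums over a stratum to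
its count. -/
lemma sum_ia {ω : E.Omega} (hω : ω ∈ E.valid) (α : Arm) (k : Fin E.K) :
    ∑ i ∈ E.stratum k, E.ia α ω i = E.ac α k := by
  rw [mem_valid] at hω
  obtain ⟨h1, h2, _⟩ := hω
  cases α with
  | samp =>
      have hpt : ∀ i ∈ E.stratum k, E.ia .samp ω i
          = if ω.1 i = true then (1:ℝ) else 0 := fun i _ => rfl
      rw [Finset.sum_congr rfl hpt, Finset.sum_boole, h1 k]; rfl
  | t1 =>
      have hpt : ∀ i ∈ E.stratum k, E.ia .t1 ω i
          = if (ω.1 i = true ∧ ω.2 i = true) then (1:ℝ) else 0 := by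
        intro i _
        by_cases hA : ω.1 i = true <;> by_cases hB : ω.2 i = true <;>
          simp [ia, Z, T, hA, hB]
      rw [Finset.sum_congr rfl hpt, Finset.sum_boole, h2 k]; rfl
  | t0 =>
      have hpt : ∀ i ∈ E.stratum k, E.ia .t0 ω i
          = if (ω.1 i = true ∧ ¬ ω.2 i = true) then (1:ℝ) else 0 := by
        intro i _
        by_cases hA : ω.1 i = true <;> by_cases hB : ω.2 i = true <;>
          simp [ia, Z, T, hA, hB]
      rw [Finset.sum_congr rfl hpt, Finset.sum_boole]
      have hsplit := Finset.card_filter_add_card_filter_not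
        (s := (E.stratum k).filter fun i => ω.1 i = true) (p := fun i => ω.2 i = true)
      rw [Finset.filter_filter, Finset.filter_filter, h1 k] at hsplit
      have hcard : ((E.stratum k).filter fun i => ω.1 i = true ∧ ¬ ω.2 i = true).card
          = E.nk k - E.nk1 k := by
        have := h2 k
        omega
      rw [hcard]
      show ((E.nk k - E.nk1 k : ℕ) : ℝ) = ((E.nk0 k : ℕ) : ℝ)
      rfl

/-- Pointwise product of two arm indicators, summed over a stratum. -/
lemma sum_ia_mul {ω : E.Omega} (hω : ω ∈ E.valid) (α β : Arm) (k : Fin E.K) :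
    ∑ i ∈ E.stratum k, E.ia α ω i * E.ia β ω i = E.ad α β k := by
  have hz : ∀ (α β γ : Arm), (∀ i, E.ia α ω i * E.ia β ω i = E.ia γ ω i) →
      E.ac γ k = E.ad α β k →
      ∑ i ∈ E.stratum k, E.ia α ω i * E.ia β ω i = E.ad α β k := by
    intro α β γ hpt hval
    rw [Finset.sum_congr rfl fun i _ => hpt i, E.sum_ia hω γ k, hval]
  have hzero : ∀ (α β : Arm), (∀ i, E.ia α ω i * E.ia β ω i = 0) →
      E.ad α β k = 0 →
      ∑ i ∈ E.stratum k, E.ia α ω i * E.ia β ω i = E.ad α β k := by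
    intro α β hpt hval
    rw [Finset.sum_congr rfl fun i _ => hpt i, Finset.sum_const, smul_zero, hval]
  have hc : ∀ (i : Fin E.N), (ω.1 i = true ∨ ω.1 i = false) ∧
      (ω.2 i = true ∨ ω.2 i = false) := by
    intro i; constructor <;> [cases ω.1 i; cases ω.2 i] <;> simp
  cases α <;> cases β
  case t1.t1 => exact hz _ _ .t1 (fun i => by
    rcases hc i with ⟨h1 | h1, h2 | h2⟩ <;> simp [ia, Z, T, h1, h2]) rfl
  case t1.t0 => exact hzero _ _ (fun i => by
    rcases hc i with ⟨h1 | h1, h2 | h2⟩ <;> simp [ia, Z, T, h1, h2]) rfl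
  case t1.samp => exact hz _ _ .t1 (fun i => by
    rcases hc i with ⟨h1 | h1, h2 | h2⟩ <;> simp [ia, Z, T, h1, h2]) rfl
  case t0.t1 => exact hzero _ _ (fun i => by
    rcases hc i with ⟨h1 | h1, h2 | h2⟩ <;> simp [ia, Z, T, h1, h2]) rfl
  case t0.t0 => exact hz _ _ .t0 (fun i => by
    rcases hc i with ⟨h1 | h1, h2 | h2⟩ <;> simp [ia, Z, T, h1, h2]) rfl
  case t0.samp => exact hz _ _ .t0 (fun i => by
    rcases hc i with ⟨h1 | h1, h2 | h2⟩ <;> simp [ia, Z, T, h1, h2]) rfl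
  case samp.t1 => exact hz _ _ .t1 (fun i => by
    rcases hc i with ⟨h1 | h1, h2 | h2⟩ <;> simp [ia, Z, T, h1, h2]) rfl
  case samp.t0 => exact hz _ _ .t0 (fun i => by
    rcases hc i with ⟨h1 | h1, h2 | h2⟩ <;> simp [ia, Z, T, h1, h2]) rfl
  case samp.samp => exact hz _ _ .samp (fun i => by
    rcases hc i with ⟨h1 | h1, h2 | h2⟩ <;> simp [ia, Z, T, h1, h2]) rfl

lemma ia_comp (α : Arm) (σ : Equiv.Perm (Fin E.N)) (ω : E.Omega) (i : Fin E.N) :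
    E.ia α (ω.1 ∘ σ, ω.2 ∘ σ) i = E.ia α ω (σ i) := by
  cases α <;> rfl

lemma st_eq_of_mem {i : Fin E.N} {k : Fin E.K} (hi : i ∈ E.stratum k) : E.st i = k :=
  E.mem_stratum.1 hi

lemma st_swap {i i' : Fin E.N} (h : E.st i = E.st i') (x : Fin E.N) :
    E.st (Equiv.swap i i' x) = E.st x := by
  rcases eq_or_ne x i with rfl | hxi
  · rw [Equiv.swap_apply_left, ← h]
  rcases eq_or_ne x i' with rfl | hxi'
  · rw [Equiv.swap_apply_right, h]
  · rw [Equiv.swap_apply_of_ne_of_ne hxi hxi']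

/-- Attainability is invariant under strata-preserving relabelings of the units. -/
lemma comp_mem_valid (σ : Equiv.Perm (Fin E.N)) (hσ : ∀ x, E.st (σ x) = E.st x)
    {ω : E.Omega} (hω : ω ∈ E.valid) : (ω.1 ∘ σ, ω.2 ∘ σ) ∈ E.valid := by
  rw [mem_valid] at hω ⊢
  obtain ⟨h1, h2, h3⟩ := hω
  have hcard : ∀ (p : Fin E.N → Prop) (_ : DecidablePred p) (k : Fin E.K),
      ((E.stratum k).filter fun i => p (σ i)).card = ((E.stratum k).filter p).card := by
    intro p hdec k
    apply Finset.card_bij (fun i _ => σ i)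
    · intro a ha
      rw [Finset.mem_filter] at ha ⊢
      exact ⟨E.mem_stratum.2 (by rw [hσ]; exact E.st_eq_of_mem ha.1), ha.2⟩
    · intro a _ b _ hab
      exact σ.injective hab
    · intro b hb
      rw [Finset.mem_filter] at hb
      refine ⟨σ.symm b, Finset.mem_filter.2 ⟨E.mem_stratum.2 ?_, ?_⟩, ?_⟩
      · rw [← hσ (σ.symm b), Equiv.apply_symm_apply]
        exact E.st_eq_of_mem hb.1
      · show p (σ (σ.symm b)); rw [Equiv.apply_symm_apply]; exact hb.2
      · exact Equiv.apply_symm_apply σ b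
  refine ⟨fun k => ?_, fun k => ?_, fun i hi => h3 (σ i) hi⟩
  · exact (hcard (fun j => ω.1 j = true) inferInstance k).trans (h1 k)
  · exact (hcard (fun j => ω.1 j = true ∧ ω.2 j = true) inferInstance k).trans (h2 k)

/-- Sums over attainable configurations are invariant under strata-preserving
relabelings. -/
lemma sum_comp (σ : Equiv.Perm (Fin E.N)) (hσ : ∀ x, E.st (σ x) = E.st x)
    (F : E.Omega → ℝ) :
    ∑ ω ∈ E.valid, F (ω.1 ∘ σ, ω.2 ∘ σ) = ∑ ω ∈ E.valid, F ω := by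
  have hσ' : ∀ x, E.st (σ.symm x) = E.st x := fun x => by
    conv_rhs => rw [← Equiv.apply_symm_apply σ x]
    rw [hσ]
  refine Finset.sum_nbij' (fun ω => (ω.1 ∘ σ, ω.2 ∘ σ)) (fun ω => (ω.1 ∘ σ.symm, ω.2 ∘ σ.symm))
    ?_ ?_ ?_ ?_ ?_
  · intro ω hω; exact E.comp_mem_valid σ hσ hω
  · intro ω hω; exact E.comp_mem_valid σ.symm hσ' hω
  · intro ω _
    refine Prod.ext (funext fun x => ?_) (funext fun x => ?_) <;> simp
  · intro ω _
    refine Prod.ext (funext fun x => ?_) (funext fun x => ?_) <;> simp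
  · intro ω _; rfl

lemma sum_swap1 (α : Arm) (σ : Equiv.Perm (Fin E.N)) (hσ : ∀ x, E.st (σ x) = E.st x)
    (p : Fin E.N) :
    ∑ ω ∈ E.valid, E.ia α ω (σ p) = ∑ ω ∈ E.valid, E.ia α ω p := by
  have := E.sum_comp σ hσ (fun ω => E.ia α ω p)
  rw [Finset.sum_congr rfl fun ω _ => E.ia_comp α σ ω p] at this
  exact this

lemma sum_swap2 (α β : Arm) (σ : Equiv.Perm (Fin E.N)) (hσ : ∀ x, E.st (σ x) = E.st x)
    (p q : Fin E.N) :
    ∑ ω ∈ E.valid, E.ia α ω (σ p) * E.ia β ω (σ q)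
      = ∑ ω ∈ E.valid, E.ia α ω p * E.ia β ω q := by
  have := E.sum_comp σ hσ (fun ω => E.ia α ω p * E.ia β ω q)
  rw [Finset.sum_congr rfl fun ω _ => by rw [E.ia_comp α σ ω p, E.ia_comp β σ ω q]] at this
  exact this

/-- First moment sum: `Nk * ∑_ω uᵢ = |valid| * c`. -/
lemma sum_single (α : Arm) {k : Fin E.K} {i : Fin E.N} (hi : i ∈ E.stratum k) :
    (E.Nk k : ℝ) * ∑ ω ∈ E.valid, E.ia α ω i = (E.valid.card : ℝ) * E.ac α k := by
  have h1 : ∀ i' ∈ E.stratum k, (∑ ω ∈ E.valid, E.ia α ω i')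
      = ∑ ω ∈ E.valid, E.ia α ω i := by
    intro i' hi'
    have hst : E.st i = E.st i' := by rw [E.st_eq_of_mem hi, E.st_eq_of_mem hi']
    have := E.sum_swap1 α (Equiv.swap i i') (E.st_swap hst) i'
    rw [Equiv.swap_apply_right] at this
    rw [← this]
  calc (E.Nk k : ℝ) * ∑ ω ∈ E.valid, E.ia α ω i
      = ∑ i' ∈ E.stratum k, ∑ ω ∈ E.valid, E.ia α ω i' := by
        rw [Finset.sum_congr rfl h1, Finset.sum_const, card_stratum, nsmul_eq_mul]
    _ = ∑ ω ∈ E.valid, ∑ i' ∈ E.stratum k, E.ia α ω i' := Finset.sum_comm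
    _ = ∑ ω ∈ E.valid, E.ac α k :=
        Finset.sum_congr rfl fun ω hω => E.sum_ia hω α k
    _ = (E.valid.card : ℝ) * E.ac α k := by rw [Finset.sum_const, nsmul_eq_mul]

/-- Same-unit product moment sum. -/
lemma sum_single_mul (α β : Arm) {k : Fin E.K} {i : Fin E.N} (hi : i ∈ E.stratum k) :
    (E.Nk k : ℝ) * ∑ ω ∈ E.valid, E.ia α ω i * E.ia β ω i
      = (E.valid.card : ℝ) * E.ad α β k := by
  have h1 : ∀ i' ∈ E.stratum k, (∑ ω ∈ E.valid, E.ia α ω i' * E.ia β ω i')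
      = ∑ ω ∈ E.valid, E.ia α ω i * E.ia β ω i := by
    intro i' hi'
    have hst : E.st i = E.st i' := by rw [E.st_eq_of_mem hi, E.st_eq_of_mem hi']
    have := E.sum_swap2 α β (Equiv.swap i i') (E.st_swap hst) i' i'
    rw [Equiv.swap_apply_right] at this
    rw [← this]
  calc (E.Nk k : ℝ) * ∑ ω ∈ E.valid, E.ia α ω i * E.ia β ω i
      = ∑ i' ∈ E.stratum k, ∑ ω ∈ E.valid, E.ia α ω i' * E.ia β ω i' := by
        rw [Finset.sum_congr rfl h1, Finset.sum_const, card_stratum, nsmul_eq_mul]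
    _ = ∑ ω ∈ E.valid, ∑ i' ∈ E.stratum k, E.ia α ω i' * E.ia β ω i' := Finset.sum_comm
    _ = ∑ ω ∈ E.valid, E.ad α β k :=
        Finset.sum_congr rfl fun ω hω => E.sum_ia_mul hω α β k
    _ = (E.valid.card : ℝ) * E.ad α β k := by rw [Finset.sum_const, nsmul_eq_mul]

/-- Distinct-unit, same-stratum product moment sum. -/
lemma sum_pair_same (α β : Arm) {k : Fin E.K} {i j : Fin E.N}
    (hi : i ∈ E.stratum k) (hj : j ∈ E.stratum k) (hij : j ≠ i) :
    (E.Nk k : ℝ) * (((E.Nk k : ℝ) - 1) * ∑ ω ∈ E.valid, E.ia α ω i * E.ia β ω j)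
      = (E.valid.card : ℝ) * (E.ac α k * E.ac β k - E.ad α β k) := by
  have hNk : 0 < E.Nk k := Finset.card_pos.2 ⟨i, hi⟩
  have h1 : ∀ j' ∈ (E.stratum k).erase i,
      (∑ ω ∈ E.valid, E.ia α ω i * E.ia β ω j')
        = ∑ ω ∈ E.valid, E.ia α ω i * E.ia β ω j := by
    intro j' hj'
    obtain ⟨hj'i, hj'mem⟩ := Finset.mem_erase.1 hj'
    have hst : E.st j = E.st j' := by rw [E.st_eq_of_mem hj, E.st_eq_of_mem hj'mem]
    have := E.sum_swap2 α β (Equiv.swap j j') (E.st_swap hst) i j'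
    rw [Equiv.swap_apply_right, Equiv.swap_apply_of_ne_of_ne (Ne.symm hij) (Ne.symm hj'i)]
      at this
    rw [← this]
  have e1 : ((E.Nk k : ℝ) - 1) * ∑ ω ∈ E.valid, E.ia α ω i * E.ia β ω j
      = ∑ j' ∈ (E.stratum k).erase i, ∑ ω ∈ E.valid, E.ia α ω i * E.ia β ω j' := by
    rw [Finset.sum_congr rfl h1, Finset.sum_const, Finset.card_erase_of_mem hi,
      card_stratum, nsmul_eq_mul, Nat.cast_sub hNk, Nat.cast_one]
  have e2 : ∑ j' ∈ (E.stratum k).erase i, ∑ ω ∈ E.valid, E.ia α ω i * E.ia β ω j'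
      = E.ac β k * (∑ ω ∈ E.valid, E.ia α ω i)
        - ∑ ω ∈ E.valid, E.ia α ω i * E.ia β ω i := by
    rw [Finset.sum_comm]
    have hpt : ∀ ω ∈ E.valid, (∑ j' ∈ (E.stratum k).erase i, E.ia α ω i * E.ia β ω j')
        = E.ac β k * E.ia α ω i - E.ia α ω i * E.ia β ω i := by
      intro ω hω
      rw [← Finset.mul_sum, Finset.sum_erase_eq_sub hi, E.sum_ia hω β k]
      ring
    rw [Finset.sum_congr rfl hpt, Finset.sum_sub_distrib, ← Finset.mul_sum]
  have s1 := E.sum_single α hi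
  have s2 := E.sum_single_mul α β hi
  rw [e1, e2]
  linear_combination E.ac β k * s1 - s2

/-- Distinct-strata product moment sum. -/
lemma sum_pair_cross (α β : Arm) {k l : Fin E.K} (hkl : k ≠ l) {i j : Fin E.N}
    (hi : i ∈ E.stratum k) (hj : j ∈ E.stratum l) :
    (E.Nk k : ℝ) * ((E.Nk l : ℝ) * ∑ ω ∈ E.valid, E.ia α ω i * E.ia β ω j)
      = (E.valid.card : ℝ) * (E.ac α k * E.ac β l) := by
  have hne : ∀ j' ∈ E.stratum l, j' ≠ i := by
    intro j' hj' h
    exact hkl (by rw [← E.st_eq_of_mem hi, ← h, E.st_eq_of_mem hj'])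
  have h1 : ∀ j' ∈ E.stratum l,
      (∑ ω ∈ E.valid, E.ia α ω i * E.ia β ω j')
        = ∑ ω ∈ E.valid, E.ia α ω i * E.ia β ω j := by
    intro j' hj'
    have hst : E.st j = E.st j' := by rw [E.st_eq_of_mem hj, E.st_eq_of_mem hj']
    have := E.sum_swap2 α β (Equiv.swap j j') (E.st_swap hst) i j'
    rw [Equiv.swap_apply_right,
      Equiv.swap_apply_of_ne_of_ne (Ne.symm (hne j hj)) (Ne.symm (hne j' hj'))] at this
    rw [← this]
  have e1 : (E.Nk l : ℝ) * ∑ ω ∈ E.valid, E.ia α ω i * E.ia β ω j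
      = ∑ j' ∈ E.stratum l, ∑ ω ∈ E.valid, E.ia α ω i * E.ia β ω j' := by
    rw [Finset.sum_congr rfl h1, Finset.sum_const, card_stratum, nsmul_eq_mul]
  have e2 : ∑ j' ∈ E.stratum l, ∑ ω ∈ E.valid, E.ia α ω i * E.ia β ω j'
      = E.ac β l * ∑ ω ∈ E.valid, E.ia α ω i := by
    rw [Finset.sum_comm]
    have hpt : ∀ ω ∈ E.valid, (∑ j' ∈ E.stratum l, E.ia α ω i * E.ia β ω j')
        = E.ac β l * E.ia α ω i := by
      intro ω hω
      rw [← Finset.mul_sum, E.sum_ia hω β l]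
      ring
    rw [Finset.sum_congr rfl hpt, ← Finset.mul_sum]
  have s1 := E.sum_single α hi
  rw [e1, e2]
  linear_combination E.ac β l * s1

/-- The set of attainable configurations is nonempty. -/
lemma valid_nonempty (h1 : ∀ k, E.nk1 k ≤ E.nk k) (h2 : ∀ k, E.nk k ≤ E.Nk k) :
    E.valid.Nonempty := by
  have hS : ∀ k : Fin E.K, ∃ s ⊆ E.stratum k, s.card = E.nk k := fun k =>
    Finset.exists_subset_card_eq (h2 k)
  choose S hSsub hScard using hS
  have hT : ∀ k : Fin E.K, ∃ t ⊆ S k, t.card = E.nk1 k := fun k =>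
    Finset.exists_subset_card_eq (by rw [hScard]; exact h1 k)
  choose T hTsub hTcard using hT
  refine ⟨(fun i => decide (i ∈ S (E.st i)), fun i => decide (i ∈ T (E.st i))), ?_⟩
  rw [mem_valid]
  refine ⟨fun k => ?_, fun k => ?_, fun i hi => ?_⟩
  · have : ((E.stratum k).filter fun i => decide (i ∈ S (E.st i)) = true) = S k := by
      ext i
      simp only [Finset.mem_filter, decide_eq_true_eq]
      constructor
      · rintro ⟨hik, hiS⟩
        rwa [E.st_eq_of_mem hik] at hiS
      · intro hiS
        have hik : i ∈ E.stratum k := hSsub k hiS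
        exact ⟨hik, by rwa [E.st_eq_of_mem hik]⟩
    rw [this, hScard]
  · have : ((E.stratum k).filter fun i =>
        decide (i ∈ S (E.st i)) = true ∧ decide (i ∈ T (E.st i)) = true) = T k := by
      ext i
      simp only [Finset.mem_filter, decide_eq_true_eq]
      constructor
      · rintro ⟨hik, _, hiT⟩
        rwa [E.st_eq_of_mem hik] at hiT
      · intro hiT
        have hik : i ∈ E.stratum k := hSsub k (hTsub k hiT)
        refine ⟨hik, ?_, ?_⟩ <;> rw [E.st_eq_of_mem hik]
        · exact hTsub k hiT
        · exact hiT
    rw [this, hTcard]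
  · simp only [decide_eq_true_eq] at hi ⊢
    exact hTsub (E.st i) hi

section Positivity

variable (hlo : ∀ k, 2 ≤ E.nk1 k) (hhi : ∀ k, E.nk1 k + 2 ≤ E.nk k)
  (hsub : ∀ k, E.nk k ≤ E.Nk k)

include hhi in
lemma nk0_ge (k : Fin E.K) : 2 ≤ E.nk0 k := by
  have := hhi k; unfold nk0; omega

include hhi in
lemma nk1_add_nk0 (k : Fin E.K) : E.nk1 k + E.nk0 k = E.nk k := by
  have := hhi k; unfold nk0; omega

include hlo hhi in
lemma nk_ge (k : Fin E.K) : 4 ≤ E.nk k := by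
  have := hlo k; have := hhi k; omega

include hlo hhi hsub in
lemma Nk_ge (k : Fin E.K) : 4 ≤ E.Nk k := le_trans (E.nk_ge hlo hhi k) (hsub k)

include hlo hhi in
lemma n_pos (k : Fin E.K) : 0 < E.n := by
  have h4 := E.nk_ge hlo hhi k
  have : E.nk k ≤ E.n := Finset.single_le_sum (fun _ _ => Nat.zero_le _) (Finset.mem_univ k)
  omega

include hlo hhi in
lemma ac_ne (α : Arm) (k : Fin E.K) : E.ac α k ≠ 0 := by
  have h1 := hlo k
  have h0 := E.nk0_ge hhi k
  have hn := E.nk_ge hlo hhi k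
  cases α <;> simp only [ac] <;> positivity

end Positivity

lemma meanK_sub (a b : Fin E.N → ℝ) (k : Fin E.K) :
    E.meanK (fun i => a i - b i) k = E.meanK a k - E.meanK b k := by
  unfold meanK
  rw [Finset.sum_sub_distrib, sub_div]

lemma covK_symm (a b : Fin E.N → ℝ) (k : Fin E.K) : E.covK a b k = E.covK b a k := by
  unfold covK
  congr 1
  exact Finset.sum_congr rfl fun i _ => by ring

lemma covK_sub_right (a b b' : Fin E.N → ℝ) (k : Fin E.K) :
    E.covK a (fun i => b i - b' i) k = E.covK a b k - E.covK a b' k := by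
  unfold covK
  rw [E.meanK_sub, ← sub_div]
  congr 1
  rw [← Finset.sum_sub_distrib]
  exact Finset.sum_congr rfl fun i _ => by ring

lemma covK_sub_left (a a' b : Fin E.N → ℝ) (k : Fin E.K) :
    E.covK (fun i => a i - a' i) b k = E.covK a b k - E.covK a' b k := by
  rw [E.covK_symm, E.covK_sub_right, E.covK_symm b a, E.covK_symm b a']

lemma covK_eq (a b : Fin E.N → ℝ) (k : Fin E.K) (hN : (E.Nk k : ℝ) ≠ 0) :
    E.covK a b k = ((∑ i ∈ E.stratum k, a i * b i)
        - (∑ i ∈ E.stratum k, a i) * (∑ i ∈ E.stratum k, b i) / (E.Nk k : ℝ))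
      / ((E.Nk k : ℝ) - 1) := by
  unfold covK meanK
  congr 1
  have hpt : ∀ i ∈ E.stratum k,
      (a i - (∑ i ∈ E.stratum k, a i) / (E.Nk k : ℝ))
        * (b i - (∑ i ∈ E.stratum k, b i) / (E.Nk k : ℝ))
      = a i * b i - ((∑ i ∈ E.stratum k, b i) / (E.Nk k : ℝ)) * a i
        - ((∑ i ∈ E.stratum k, a i) / (E.Nk k : ℝ)) * b i
        + ((∑ i ∈ E.stratum k, a i) / (E.Nk k : ℝ))
          * ((∑ i ∈ E.stratum k, b i) / (E.Nk k : ℝ)) := fun i _ => by ring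
  rw [Finset.sum_congr rfl hpt]
  rw [Finset.sum_add_distrib, Finset.sum_sub_distrib, Finset.sum_sub_distrib,
    ← Finset.mul_sum, ← Finset.mul_sum, Finset.sum_const, card_stratum, nsmul_eq_mul]
  field_simp
  ring

section Weighted

variable (hlo : ∀ k, 2 ≤ E.nk1 k) (hhi : ∀ k, E.nk1 k + 2 ≤ E.nk k)
  (hsub : ∀ k, E.nk k ≤ E.Nk k)

include hlo hhi hsub in
lemma Nk_cast_ne (k : Fin E.K) : (E.Nk k : ℝ) ≠ 0 :=
  Nat.cast_ne_zero.mpr (by have := E.Nk_ge hlo hhi hsub k; omega)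

include hlo hhi hsub in
lemma Nk_cast_sub_one_ne (k : Fin E.K) : (E.Nk k : ℝ) - 1 ≠ 0 := by
  have h4 := E.Nk_ge hlo hhi hsub k
  have : (4 : ℝ) ≤ (E.Nk k : ℝ) := by exact_mod_cast h4
  linarith

include hlo hhi hsub in
lemma sum_mA (α : Arm) (a : Fin E.N → ℝ) (k : Fin E.K) :
    ∑ ω ∈ E.valid, E.mA α a k ω = (E.valid.card : ℝ) * E.meanK a k := by
  have hN := E.Nk_cast_ne hlo hhi hsub k
  have hc : E.ac α k ≠ 0 := E.ac_ne hlo hhi α k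
  have hsingle : ∀ i ∈ E.stratum k, (∑ ω ∈ E.valid, E.ia α ω i)
      = (E.valid.card : ℝ) * E.ac α k / (E.Nk k : ℝ) := by
    intro i hi
    have h := E.sum_single α hi
    field_simp
    linear_combination h
  unfold mA
  rw [← Finset.sum_div]
  have h2 : ∑ ω ∈ E.valid, ∑ i ∈ E.stratum k, E.ia α ω i * a i
      = ∑ i ∈ E.stratum k, ((E.valid.card : ℝ) * E.ac α k / (E.Nk k : ℝ)) * a i := by
    rw [Finset.sum_comm]
    refine Finset.sum_congr rfl fun i hi => ?_
    rw [← Finset.sum_mul, hsingle i hi]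
  rw [h2, ← Finset.mul_sum]
  unfold meanK
  field_simp

include hlo hhi hsub in
lemma sum_mA_mul_same (α β : Arm) (a b : Fin E.N → ℝ) (k : Fin E.K) :
    ∑ ω ∈ E.valid, E.mA α a k ω * E.mA β b k ω
      = (E.valid.card : ℝ)
          * (E.meanK a k * E.meanK b k + E.lam α β k * E.covK a b k) := by
  have hN := E.Nk_cast_ne hlo hhi hsub k
  have hN1 := E.Nk_cast_sub_one_ne hlo hhi hsub k
  have hc := E.ac_ne hlo hhi α k
  have hc' := E.ac_ne hlo hhi β k
  have hsame : ∀ i ∈ E.stratum k, (∑ ω ∈ E.valid, E.ia α ω i * E.ia β ω i)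
      = (E.valid.card : ℝ) * E.ad α β k / (E.Nk k : ℝ) := by
    intro i hi
    have h := E.sum_single_mul α β hi
    field_simp
    linear_combination h
  have hpair : ∀ i ∈ E.stratum k, ∀ j ∈ E.stratum k, j ≠ i →
      (∑ ω ∈ E.valid, E.ia α ω i * E.ia β ω j)
        = (E.valid.card : ℝ) * (E.ac α k * E.ac β k - E.ad α β k)
            / ((E.Nk k : ℝ) * ((E.Nk k : ℝ) - 1)) := by
    intro i hi j hj hij
    have h := E.sum_pair_same α β hi hj hij
    field_simp
    linear_combination h
  have expand : ∑ ω ∈ E.valid,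
      (∑ i ∈ E.stratum k, E.ia α ω i * a i) * (∑ j ∈ E.stratum k, E.ia β ω j * b j)
      = ∑ i ∈ E.stratum k, ∑ j ∈ E.stratum k,
          (a i * b j) * ∑ ω ∈ E.valid, E.ia α ω i * E.ia β ω j := by
    have h1 : ∀ ω ∈ E.valid,
        (∑ i ∈ E.stratum k, E.ia α ω i * a i) * (∑ j ∈ E.stratum k, E.ia β ω j * b j)
        = ∑ i ∈ E.stratum k, ∑ j ∈ E.stratum k,
            (a i * b j) * (E.ia α ω i * E.ia β ω j) := by
      intro ω _
      rw [Finset.sum_mul_sum]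
      exact Finset.sum_congr rfl fun i _ => Finset.sum_congr rfl fun j _ => by ring
    rw [Finset.sum_congr rfl h1, Finset.sum_comm]
    refine Finset.sum_congr rfl fun i _ => ?_
    rw [Finset.sum_comm]
    refine Finset.sum_congr rfl fun j _ => ?_
    rw [← Finset.mul_sum]
  have hsplit : ∀ i ∈ E.stratum k,
      (∑ j ∈ E.stratum k, (a i * b j) * ∑ ω ∈ E.valid, E.ia α ω i * E.ia β ω j)
      = (a i * b i) * ((E.valid.card : ℝ) * E.ad α β k / (E.Nk k : ℝ))
        + ((E.valid.card : ℝ) * (E.ac α k * E.ac β k - E.ad α β k)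
            / ((E.Nk k : ℝ) * ((E.Nk k : ℝ) - 1)))
          * (a i * ((∑ j ∈ E.stratum k, b j) - b i)) := by
    intro i hi
    rw [← Finset.sum_erase_add _ _ hi]
    have h2 : ∀ j ∈ (E.stratum k).erase i,
        (a i * b j) * (∑ ω ∈ E.valid, E.ia α ω i * E.ia β ω j)
        = ((E.valid.card : ℝ) * (E.ac α k * E.ac β k - E.ad α β k)
            / ((E.Nk k : ℝ) * ((E.Nk k : ℝ) - 1))) * (a i * b j) := by
      intro j hj
      obtain ⟨hji, hjmem⟩ := Finset.mem_erase.1 hj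
      rw [hpair i hi j hjmem hji]
      ring
    have h3 : ∀ j ∈ (E.stratum k).erase i,
        ((E.valid.card : ℝ) * (E.ac α k * E.ac β k - E.ad α β k)
            / ((E.Nk k : ℝ) * ((E.Nk k : ℝ) - 1))) * (a i * b j)
        = ((E.valid.card : ℝ) * (E.ac α k * E.ac β k - E.ad α β k)
            / ((E.Nk k : ℝ) * ((E.Nk k : ℝ) - 1)) * a i) * b j := fun j _ => by ring
    rw [Finset.sum_congr rfl h2, Finset.sum_congr rfl h3, ← Finset.mul_sum,
      Finset.sum_erase_eq_sub hi, hsame i hi]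
    ring
  have hsum : ∑ ω ∈ E.valid,
      (∑ i ∈ E.stratum k, E.ia α ω i * a i) * (∑ j ∈ E.stratum k, E.ia β ω j * b j)
      = (∑ i ∈ E.stratum k, a i * b i)
          * ((E.valid.card : ℝ) * E.ad α β k / (E.Nk k : ℝ))
        + ((E.valid.card : ℝ) * (E.ac α k * E.ac β k - E.ad α β k)
            / ((E.Nk k : ℝ) * ((E.Nk k : ℝ) - 1)))
          * ((∑ i ∈ E.stratum k, a i) * (∑ i ∈ E.stratum k, b i)
              - ∑ i ∈ E.stratum k, a i * b i) := by
    rw [expand, Finset.sum_congr rfl hsplit, Finset.sum_add_distrib, ← Finset.sum_mul,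
      ← Finset.mul_sum]
    congr 1
    have h4 : ∀ i ∈ E.stratum k,
        a i * ((∑ j ∈ E.stratum k, b j) - b i)
        = a i * (∑ j ∈ E.stratum k, b j) - a i * b i := fun i _ => by ring
    rw [Finset.sum_congr rfl h4, Finset.sum_sub_distrib, ← Finset.sum_mul]
  have hptwise : ∀ ω ∈ E.valid, E.mA α a k ω * E.mA β b k ω
      = ((∑ i ∈ E.stratum k, E.ia α ω i * a i)
          * (∑ j ∈ E.stratum k, E.ia β ω j * b j)) / (E.ac α k * E.ac β k) := by
    intro ω _
    unfold mA
    rw [div_mul_div_comm]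
  rw [Finset.sum_congr rfl hptwise, ← Finset.sum_div, hsum,
    E.covK_eq a b k hN]
  unfold meanK lam
  field_simp
  ring

include hlo hhi hsub in
lemma sum_mA_mul_cross (α β : Arm) (a b : Fin E.N → ℝ) {k l : Fin E.K} (hkl : k ≠ l) :
    ∑ ω ∈ E.valid, E.mA α a k ω * E.mA β b l ω
      = (E.valid.card : ℝ) * (E.meanK a k * E.meanK b l) := by
  have hN := E.Nk_cast_ne hlo hhi hsub k
  have hNl := E.Nk_cast_ne hlo hhi hsub l
  have hc := E.ac_ne hlo hhi α k
  have hc' := E.ac_ne hlo hhi β l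
  have hpair : ∀ i ∈ E.stratum k, ∀ j ∈ E.stratum l,
      (∑ ω ∈ E.valid, E.ia α ω i * E.ia β ω j)
        = (E.valid.card : ℝ) * (E.ac α k * E.ac β l) / ((E.Nk k : ℝ) * (E.Nk l : ℝ)) := by
    intro i hi j hj
    have h := E.sum_pair_cross α β hkl hi hj
    field_simp
    linear_combination h
  have expand : ∑ ω ∈ E.valid,
      (∑ i ∈ E.stratum k, E.ia α ω i * a i) * (∑ j ∈ E.stratum l, E.ia β ω j * b j)
      = ∑ i ∈ E.stratum k, ∑ j ∈ E.stratum l,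
          (a i * b j) * ∑ ω ∈ E.valid, E.ia α ω i * E.ia β ω j := by
    have h1 : ∀ ω ∈ E.valid,
        (∑ i ∈ E.stratum k, E.ia α ω i * a i) * (∑ j ∈ E.stratum l, E.ia β ω j * b j)
        = ∑ i ∈ E.stratum k, ∑ j ∈ E.stratum l,
            (a i * b j) * (E.ia α ω i * E.ia β ω j) := by
      intro ω _
      rw [Finset.sum_mul_sum]
      exact Finset.sum_congr rfl fun i _ => Finset.sum_congr rfl fun j _ => by ring
    rw [Finset.sum_congr rfl h1, Finset.sum_comm]
    refine Finset.sum_congr rfl fun i _ => ?_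
    rw [Finset.sum_comm]
    refine Finset.sum_congr rfl fun j _ => ?_
    rw [← Finset.mul_sum]
  have hsplit : ∀ i ∈ E.stratum k,
      (∑ j ∈ E.stratum l, (a i * b j) * ∑ ω ∈ E.valid, E.ia α ω i * E.ia β ω j)
      = ((E.valid.card : ℝ) * (E.ac α k * E.ac β l) / ((E.Nk k : ℝ) * (E.Nk l : ℝ)) * a i)
          * (∑ j ∈ E.stratum l, b j) := by
    intro i hi
    have h2 : ∀ j ∈ E.stratum l,
        (a i * b j) * (∑ ω ∈ E.valid, E.ia α ω i * E.ia β ω j)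
        = ((E.valid.card : ℝ) * (E.ac α k * E.ac β l)
            / ((E.Nk k : ℝ) * (E.Nk l : ℝ)) * a i) * b j := by
      intro j hj
      rw [hpair i hi j hj]
      ring
    rw [Finset.sum_congr rfl h2, ← Finset.mul_sum]
  have hsum : ∑ ω ∈ E.valid,
      (∑ i ∈ E.stratum k, E.ia α ω i * a i) * (∑ j ∈ E.stratum l, E.ia β ω j * b j)
      = (E.valid.card : ℝ) * (E.ac α k * E.ac β l) / ((E.Nk k : ℝ) * (E.Nk l : ℝ))
          * ((∑ i ∈ E.stratum k, a i) * (∑ j ∈ E.stratum l, b j)) := by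
    rw [expand, Finset.sum_congr rfl hsplit, ← Finset.sum_mul, ← Finset.mul_sum]
    ring
  have hptwise : ∀ ω ∈ E.valid, E.mA α a k ω * E.mA β b l ω
      = ((∑ i ∈ E.stratum k, E.ia α ω i * a i)
          * (∑ j ∈ E.stratum l, E.ia β ω j * b j)) / (E.ac α k * E.ac β l) := by
    intro ω _
    unfold mA
    rw [div_mul_div_comm]
  rw [Finset.sum_congr rfl hptwise, ← Finset.sum_div, hsum]
  unfold meanK
  field_simp

include hlo hhi hsub in
/-- The centered second-moment sum: the heart of Proposition 1. -/
lemma sum_cen_mul (α β : Arm) (a b : Fin E.N → ℝ) (k l : Fin E.K) :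
    ∑ ω ∈ E.valid, (E.mA α a k ω - E.meanK a k) * (E.mA β b l ω - E.meanK b l)
      = if k = l then (E.valid.card : ℝ) * (E.lam α β k * E.covK a b k) else 0 := by
  have hexp : ∑ ω ∈ E.valid, (E.mA α a k ω - E.meanK a k) * (E.mA β b l ω - E.meanK b l)
      = (∑ ω ∈ E.valid, E.mA α a k ω * E.mA β b l ω)
        - E.meanK b l * ∑ ω ∈ E.valid, E.mA α a k ω
        - E.meanK a k * ∑ ω ∈ E.valid, E.mA β b l ω
        + (E.valid.card : ℝ) * (E.meanK a k * E.meanK b l) := by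
    have hpt : ∀ ω ∈ E.valid,
        (E.mA α a k ω - E.meanK a k) * (E.mA β b l ω - E.meanK b l)
        = E.mA α a k ω * E.mA β b l ω - E.meanK b l * E.mA α a k ω
          - E.meanK a k * E.mA β b l ω + E.meanK a k * E.meanK b l := fun ω _ => by ring
    rw [Finset.sum_congr rfl hpt, Finset.sum_add_distrib, Finset.sum_sub_distrib,
      Finset.sum_sub_distrib, ← Finset.mul_sum, ← Finset.mul_sum, Finset.sum_const,
      nsmul_eq_mul]
  rcases eq_or_ne k l with rfl | hkl
  · rw [if_pos rfl, hexp, E.sum_mA_mul_same hlo hhi hsub α β a b k,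
      E.sum_mA hlo hhi hsub α a k, E.sum_mA hlo hhi hsub β b k]
    ring
  · rw [if_neg hkl, hexp, E.sum_mA_mul_cross hlo hhi hsub α β a b hkl,
      E.sum_mA hlo hhi hsub α a k, E.sum_mA hlo hhi hsub β b l]
    ring

end Weighted

section Assembly

variable (hlo : ∀ k, 2 ≤ E.nk1 k) (hhi : ∀ k, E.nk1 k + 2 ≤ E.nk k)
  (hsub : ∀ k, E.nk k ≤ E.Nk k)

include hlo hhi hsub in
lemma sum_DD (a1 a0 b1 b0 : Fin E.N → ℝ) (k l : Fin E.K) :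
    ∑ ω ∈ E.valid,
        ((E.mA .t1 a1 k ω - E.meanK a1 k) - (E.mA .t0 a0 k ω - E.meanK a0 k))
          * ((E.mA .t1 b1 l ω - E.meanK b1 l) - (E.mA .t0 b0 l ω - E.meanK b0 l))
      = if k = l then (E.valid.card : ℝ)
          * (E.lam .t1 .t1 k * E.covK a1 b1 k - E.lam .t1 .t0 k * E.covK a1 b0 k
            - E.lam .t0 .t1 k * E.covK a0 b1 k + E.lam .t0 .t0 k * E.covK a0 b0 k)
        else 0 := by
  have hpt : ∀ ω ∈ E.valid,
      ((E.mA .t1 a1 k ω - E.meanK a1 k) - (E.mA .t0 a0 k ω - E.meanK a0 k))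
        * ((E.mA .t1 b1 l ω - E.meanK b1 l) - (E.mA .t0 b0 l ω - E.meanK b0 l))
      = (E.mA .t1 a1 k ω - E.meanK a1 k) * (E.mA .t1 b1 l ω - E.meanK b1 l)
        - (E.mA .t1 a1 k ω - E.meanK a1 k) * (E.mA .t0 b0 l ω - E.meanK b0 l)
        - (E.mA .t0 a0 k ω - E.meanK a0 k) * (E.mA .t1 b1 l ω - E.meanK b1 l)
        + (E.mA .t0 a0 k ω - E.meanK a0 k) * (E.mA .t0 b0 l ω - E.meanK b0 l) :=
    fun ω _ => by ring
  rw [Finset.sum_congr rfl hpt, Finset.sum_add_distrib, Finset.sum_sub_distrib,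
    Finset.sum_sub_distrib, E.sum_cen_mul hlo hhi hsub .t1 .t1 a1 b1 k l,
    E.sum_cen_mul hlo hhi hsub .t1 .t0 a1 b0 k l,
    E.sum_cen_mul hlo hhi hsub .t0 .t1 a0 b1 k l,
    E.sum_cen_mul hlo hhi hsub .t0 .t0 a0 b0 k l]
  by_cases hkl : k = l
  · simp only [if_pos hkl]
    ring
  · simp only [if_neg hkl]
    ring

include hlo hhi hsub in
lemma sum_DS (a1 a0 b : Fin E.N → ℝ) (k l : Fin E.K) :
    ∑ ω ∈ E.valid,
        ((E.mA .t1 a1 k ω - E.meanK a1 k) - (E.mA .t0 a0 k ω - E.meanK a0 k))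
          * (E.mA .samp b l ω - E.meanK b l)
      = if k = l then (E.valid.card : ℝ)
          * (E.lam .t1 .samp k * E.covK a1 b k - E.lam .t0 .samp k * E.covK a0 b k)
        else 0 := by
  have hpt : ∀ ω ∈ E.valid,
      ((E.mA .t1 a1 k ω - E.meanK a1 k) - (E.mA .t0 a0 k ω - E.meanK a0 k))
        * (E.mA .samp b l ω - E.meanK b l)
      = (E.mA .t1 a1 k ω - E.meanK a1 k) * (E.mA .samp b l ω - E.meanK b l)
        - (E.mA .t0 a0 k ω - E.meanK a0 k) * (E.mA .samp b l ω - E.meanK b l) :=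
    fun ω _ => by ring
  rw [Finset.sum_congr rfl hpt, Finset.sum_sub_distrib,
    E.sum_cen_mul hlo hhi hsub .t1 .samp a1 b k l,
    E.sum_cen_mul hlo hhi hsub .t0 .samp a0 b k l]
  by_cases hkl : k = l
  · simp only [if_pos hkl]
    ring
  · simp only [if_neg hkl]
    ring

lemma integral_P (f : E.Omega → ℝ) :
    ∫ ω, f ω ∂E.P = (E.valid.card : ℝ)⁻¹ * ∑ ω ∈ E.valid, f ω := by
  unfold P
  exact integral_unif' _ _

lemma key_mean (hcard : (E.valid.card : ℝ) ≠ 0) (F : Fin E.K → E.Omega → ℝ)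
    (m : Fin E.K → ℝ)
    (h : ∀ k, ∑ ω ∈ E.valid, F k ω = (E.valid.card : ℝ) * m k) :
    ∫ ω, (∑ k, E.Pi k * F k ω) ∂E.P = ∑ k, E.Pi k * m k := by
  rw [E.integral_P, Finset.sum_comm]
  have h1 : ∀ k ∈ Finset.univ, (∑ ω ∈ E.valid, E.Pi k * F k ω)
      = (E.valid.card : ℝ) * (E.Pi k * m k) := by
    intro k _
    rw [← Finset.mul_sum, h k]
    ring
  rw [Finset.sum_congr rfl h1, ← Finset.mul_sum, ← mul_assoc, inv_mul_cancel₀ hcard,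
    one_mul]

lemma key_cov (hcard : (E.valid.card : ℝ) ≠ 0) (F G : Fin E.K → E.Omega → ℝ)
    (C : Fin E.K → ℝ)
    (h : ∀ k l, ∑ ω ∈ E.valid, F k ω * G l ω
      = if k = l then (E.valid.card : ℝ) * C k else 0) :
    ∫ ω, (∑ k, E.Pi k * F k ω) * (∑ l, E.Pi l * G l ω) ∂E.P
      = ∑ k, E.Pi k ^ 2 * C k := by
  rw [E.integral_P]
  have expand : ∑ ω ∈ E.valid, (∑ k, E.Pi k * F k ω) * (∑ l, E.Pi l * G l ω)
      = ∑ k, ∑ l, (E.Pi k * E.Pi l) * ∑ ω ∈ E.valid, F k ω * G l ω := by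
    have h1 : ∀ ω ∈ E.valid, (∑ k, E.Pi k * F k ω) * (∑ l, E.Pi l * G l ω)
        = ∑ k, ∑ l, (E.Pi k * E.Pi l) * (F k ω * G l ω) := by
      intro ω _
      rw [Finset.sum_mul_sum]
      exact Finset.sum_congr rfl fun k _ => Finset.sum_congr rfl fun l _ => by ring
    rw [Finset.sum_congr rfl h1, Finset.sum_comm]
    refine Finset.sum_congr rfl fun k _ => ?_
    rw [Finset.sum_comm]
    refine Finset.sum_congr rfl fun l _ => ?_
    rw [← Finset.mul_sum]
  rw [expand]
  have hinner : ∀ k ∈ Finset.univ,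
      (∑ l, (E.Pi k * E.Pi l) * ∑ ω ∈ E.valid, F k ω * G l ω)
      = (E.valid.card : ℝ) * (E.Pi k ^ 2 * C k) := by
    intro k _
    have h2 : ∀ l ∈ Finset.univ, (E.Pi k * E.Pi l) * (∑ ω ∈ E.valid, F k ω * G l ω)
        = if k = l then (E.valid.card : ℝ) * (E.Pi k ^ 2 * C k) else 0 := by
      intro l _
      rw [h k l]
      by_cases hkl : k = l
      · subst hkl
        rw [if_pos rfl, if_pos rfl]
        ring
      · rw [if_neg hkl, if_neg hkl, mul_zero]
    rw [Finset.sum_congr rfl h2, Finset.sum_ite_eq]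
    simp
  rw [Finset.sum_congr rfl hinner, ← Finset.mul_sum, ← mul_assoc,
    inv_mul_cancel₀ hcard, one_mul]

end Assembly

end SRSE

end Statement0Aux


set_option maxHeartbeats 4000000 in
/-- Proposition 1: under the stratified randomized survey experiment the
vector `√n (τ̂ - τ, τ̂_X, δ̂_W)` has mean zero and covariance matrix
`V = ∑ₖ Π_[k]² π_[k]⁻¹ V_[k]`, stated blockwise. -/
theorem statement0 (E : SurveyExperiments.SRSE) {J1 J2 : ℕ}
    (Y1 Y0 : Fin E.N → ℝ) (W : Fin E.N → Fin J1 → ℝ) (X : Fin E.N → Fin J2 → ℝ)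
    (hlo : ∀ k, 2 ≤ E.nk1 k) (hhi : ∀ k, E.nk1 k + 2 ≤ E.nk k)
    (hsub : ∀ k, E.nk k ≤ E.Nk k) :
    (∫ ω, E.hatTau Y1 Y0 ω ∂E.P = E.tau Y1 Y0) ∧
    (∀ j, ∫ ω, E.hatTauX X ω j ∂E.P = 0) ∧
    (∀ j, ∫ ω, E.hatDeltaW W ω j ∂E.P = 0) ∧
    ((E.n : ℝ) * ∫ ω, (E.hatTau Y1 Y0 ω - E.tau Y1 Y0) ^ 2 ∂E.P = E.Vtt Y1 Y0) ∧
    (∀ j, (E.n : ℝ) * ∫ ω, (E.hatTau Y1 Y0 ω - E.tau Y1 Y0) * E.hatTauX X ω j ∂E.P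
        = E.VtX Y1 Y0 X j) ∧
    (∀ j, (E.n : ℝ) * ∫ ω, (E.hatTau Y1 Y0 ω - E.tau Y1 Y0) * E.hatDeltaW W ω j ∂E.P
        = E.VtW Y1 Y0 W j) ∧
    (∀ j j', (E.n : ℝ) * ∫ ω, E.hatTauX X ω j * E.hatTauX X ω j' ∂E.P = E.VXX X j j') ∧
    (∀ j j', (E.n : ℝ) * ∫ ω, E.hatTauX X ω j * E.hatDeltaW W ω j' ∂E.P = 0) ∧
    (∀ j j', (E.n : ℝ) * ∫ ω, E.hatDeltaW W ω j * E.hatDeltaW W ω j' ∂E.P = E.VWW W j j') := by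
  classical
  have hle : ∀ k, E.nk1 k ≤ E.nk k := fun k => by have := hhi k; omega
  have hcard : (E.valid.card : ℝ) ≠ 0 := by
    have h := Finset.card_pos.2 (E.valid_nonempty hle hsub)
    exact_mod_cast h.ne'
  have hA : ∀ k, (E.nk1 k : ℝ) ≠ 0 := fun k =>
    Nat.cast_ne_zero.mpr (by have := hlo k; omega)
  have hB : ∀ k, (E.nk0 k : ℝ) ≠ 0 := fun k =>
    Nat.cast_ne_zero.mpr (by have := E.nk0_ge hhi k; omega)
  have hCn : ∀ k, (E.nk k : ℝ) ≠ 0 := fun k =>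
    Nat.cast_ne_zero.mpr (by have := E.nk_ge hlo hhi k; omega)
  have hD : ∀ k, (E.Nk k : ℝ) ≠ 0 := E.Nk_cast_ne hlo hhi hsub
  have hnn : ∀ (_ : Fin E.K), (E.n : ℝ) ≠ 0 := fun k =>
    Nat.cast_ne_zero.mpr (by have := E.n_pos hlo hhi k; omega)
  have hAB : ∀ k, ((E.nk1 k : ℝ) + (E.nk0 k : ℝ)) ≠ 0 := fun k => by
    have h1 : 0 < E.nk1 k := by have := hlo k; omega
    have h2 : 0 < E.nk0 k := by have := E.nk0_ge hhi k; omega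
    have : (0:ℝ) < (E.nk1 k : ℝ) + (E.nk0 k : ℝ) := by positivity
    exact this.ne'
  have hABC : ∀ k, (E.nk k : ℝ) = (E.nk1 k : ℝ) + (E.nk0 k : ℝ) := fun k => by
    exact_mod_cast (E.nk1_add_nk0 hhi k).symm
  have hdiffT : ∀ ω : E.Omega, E.hatTau Y1 Y0 ω - E.tau Y1 Y0
      = ∑ k, E.Pi k * ((E.mA .t1 Y1 k ω - E.meanK Y1 k)
          - (E.mA .t0 Y0 k ω - E.meanK Y0 k)) := by
    intro ω
    unfold SRSE.hatTau SRSE.tau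
    rw [← Finset.sum_sub_distrib]
    refine Finset.sum_congr rfl fun k _ => ?_
    rw [E.mean1_eq_mA, E.mean0_eq_mA]
    ring
  have hdiffX : ∀ (j : Fin J2) (ω : E.Omega), E.hatTauX X ω j
      = ∑ k, E.Pi k * ((E.mA .t1 (fun i => X i j) k ω - E.meanK (fun i => X i j) k)
          - (E.mA .t0 (fun i => X i j) k ω - E.meanK (fun i => X i j) k)) := by
    intro j ω
    unfold SRSE.hatTauX
    refine Finset.sum_congr rfl fun k _ => ?_
    rw [E.mean1_eq_mA, E.mean0_eq_mA]
    ring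
  have hdiffW : ∀ (j : Fin J1) (ω : E.Omega), E.hatDeltaW W ω j
      = ∑ k, E.Pi k * (E.mA .samp (fun i => W i j) k ω - E.meanK (fun i => W i j) k) := by
    intro j ω
    unfold SRSE.hatDeltaW
    refine Finset.sum_congr rfl fun k _ => ?_
    rw [E.meanS_eq_mA]
  refine ⟨?_, ?_, ?_, ?_, ?_, ?_, ?_, ?_, ?_⟩
  · -- mean of hatTau
    have h : ∀ k, ∑ ω ∈ E.valid, (E.mean1 Y1 k ω - E.mean0 Y0 k ω)
        = (E.valid.card : ℝ) * (E.meanK Y1 k - E.meanK Y0 k) := by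
      intro k
      rw [Finset.sum_sub_distrib,
        Finset.sum_congr rfl fun ω _ => E.mean1_eq_mA Y1 k ω,
        Finset.sum_congr rfl fun ω _ => E.mean0_eq_mA Y0 k ω,
        E.sum_mA hlo hhi hsub .t1 Y1 k, E.sum_mA hlo hhi hsub .t0 Y0 k]
      ring
    exact E.key_mean hcard (fun k ω => E.mean1 Y1 k ω - E.mean0 Y0 k ω)
      (fun k => E.meanK Y1 k - E.meanK Y0 k) h
  · -- mean of hatTauX
    intro j
    have h : ∀ k, ∑ ω ∈ E.valid,
        (E.mean1 (fun i => X i j) k ω - E.mean0 (fun i => X i j) k ω)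
        = (E.valid.card : ℝ) * 0 := by
      intro k
      rw [Finset.sum_sub_distrib,
        Finset.sum_congr rfl fun ω _ => E.mean1_eq_mA (fun i => X i j) k ω,
        Finset.sum_congr rfl fun ω _ => E.mean0_eq_mA (fun i => X i j) k ω,
        E.sum_mA hlo hhi hsub .t1 (fun i => X i j) k,
        E.sum_mA hlo hhi hsub .t0 (fun i => X i j) k]
      ring
    exact (E.key_mean hcard
      (fun k ω => E.mean1 (fun i => X i j) k ω - E.mean0 (fun i => X i j) k ω)
      (fun _ => 0) h).trans (by simp)
  · -- mean of hatDeltaW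
    intro j
    have h : ∀ k, ∑ ω ∈ E.valid,
        (E.meanS (fun i => W i j) k ω - E.meanK (fun i => W i j) k)
        = (E.valid.card : ℝ) * 0 := by
      intro k
      rw [Finset.sum_sub_distrib,
        Finset.sum_congr rfl fun ω _ => E.meanS_eq_mA (fun i => W i j) k ω,
        E.sum_mA hlo hhi hsub .samp (fun i => W i j) k,
        Finset.sum_const, nsmul_eq_mul]
      ring
    exact (E.key_mean hcard
      (fun k ω => E.meanS (fun i => W i j) k ω - E.meanK (fun i => W i j) k)
      (fun _ => 0) h).trans (by simp)
  · -- variance of hatTau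
    have hmain : ∫ ω, (E.hatTau Y1 Y0 ω - E.tau Y1 Y0) ^ 2 ∂E.P
        = ∑ k, E.Pi k ^ 2 * (E.lam .t1 .t1 k * E.covK Y1 Y1 k
            - E.lam .t1 .t0 k * E.covK Y1 Y0 k - E.lam .t0 .t1 k * E.covK Y0 Y1 k
            + E.lam .t0 .t0 k * E.covK Y0 Y0 k) := by
      have hfun : (fun ω => (E.hatTau Y1 Y0 ω - E.tau Y1 Y0) ^ 2)
          =ᵐ[E.P] fun ω =>
            (∑ k, E.Pi k * ((E.mA .t1 Y1 k ω - E.meanK Y1 k)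
              - (E.mA .t0 Y0 k ω - E.meanK Y0 k)))
            * (∑ l, E.Pi l * ((E.mA .t1 Y1 l ω - E.meanK Y1 l)
              - (E.mA .t0 Y0 l ω - E.meanK Y0 l))) :=
        Filter.Eventually.of_forall fun ω => by simp only [hdiffT]; ring
      rw [integral_congr_ae hfun]
      exact E.key_cov hcard
        (fun k ω => (E.mA .t1 Y1 k ω - E.meanK Y1 k) - (E.mA .t0 Y0 k ω - E.meanK Y0 k))
        (fun l ω => (E.mA .t1 Y1 l ω - E.meanK Y1 l) - (E.mA .t0 Y0 l ω - E.meanK Y0 l))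
        (fun k => E.lam .t1 .t1 k * E.covK Y1 Y1 k - E.lam .t1 .t0 k * E.covK Y1 Y0 k
          - E.lam .t0 .t1 k * E.covK Y0 Y1 k + E.lam .t0 .t0 k * E.covK Y0 Y0 k)
        (fun k l => E.sum_DD hlo hhi hsub Y1 Y0 Y1 Y0 k l)
    rw [hmain]
    unfold SRSE.Vtt
    rw [Finset.mul_sum]
    refine Finset.sum_congr rfl fun k _ => ?_
    rw [E.covK_sub_left, E.covK_sub_right, E.covK_sub_right]
    have h1 := hA k; have h2 := hB k; have h4 := hD k; have h5 := hnn k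
    have h6 := hAB k
    simp only [SRSE.lam, SRSE.ac, SRSE.ad, SRSE.pik, SRSE.e1, SRSE.e0, SRSE.fk]
    rw [hABC k]
    field_simp
    ring
  · -- covariance of hatTau and hatTauX
    intro j
    have hmain : ∫ ω, (E.hatTau Y1 Y0 ω - E.tau Y1 Y0) * E.hatTauX X ω j ∂E.P
        = ∑ k, E.Pi k ^ 2 * (E.lam .t1 .t1 k * E.covK Y1 (fun i => X i j) k
            - E.lam .t1 .t0 k * E.covK Y1 (fun i => X i j) k
            - E.lam .t0 .t1 k * E.covK Y0 (fun i => X i j) k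
            + E.lam .t0 .t0 k * E.covK Y0 (fun i => X i j) k) := by
      have hfun : (fun ω => (E.hatTau Y1 Y0 ω - E.tau Y1 Y0) * E.hatTauX X ω j)
          =ᵐ[E.P] fun ω =>
            (∑ k, E.Pi k * ((E.mA .t1 Y1 k ω - E.meanK Y1 k)
              - (E.mA .t0 Y0 k ω - E.meanK Y0 k)))
            * (∑ l, E.Pi l * ((E.mA .t1 (fun i => X i j) l ω - E.meanK (fun i => X i j) l)
              - (E.mA .t0 (fun i => X i j) l ω - E.meanK (fun i => X i j) l))) :=
        Filter.Eventually.of_forall fun ω => by simp only [hdiffT, hdiffX]; try ring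
      rw [integral_congr_ae hfun]
      exact E.key_cov hcard
        (fun k ω => (E.mA .t1 Y1 k ω - E.meanK Y1 k) - (E.mA .t0 Y0 k ω - E.meanK Y0 k))
        (fun l ω => (E.mA .t1 (fun i => X i j) l ω - E.meanK (fun i => X i j) l)
          - (E.mA .t0 (fun i => X i j) l ω - E.meanK (fun i => X i j) l))
        (fun k => E.lam .t1 .t1 k * E.covK Y1 (fun i => X i j) k
          - E.lam .t1 .t0 k * E.covK Y1 (fun i => X i j) k
          - E.lam .t0 .t1 k * E.covK Y0 (fun i => X i j) k
          + E.lam .t0 .t0 k * E.covK Y0 (fun i => X i j) k)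
        (fun k l => E.sum_DD hlo hhi hsub Y1 Y0 (fun i => X i j) (fun i => X i j) k l)
    rw [hmain]
    unfold SRSE.VtX
    rw [Finset.mul_sum]
    refine Finset.sum_congr rfl fun k _ => ?_
    rw [E.covK_symm (fun i => X i j) Y1 k, E.covK_symm (fun i => X i j) Y0 k]
    have h1 := hA k; have h2 := hB k; have h4 := hD k; have h5 := hnn k
    have h6 := hAB k
    simp only [SRSE.lam, SRSE.ac, SRSE.ad, SRSE.pik, SRSE.e1, SRSE.e0, SRSE.fk]
    rw [hABC k]
    field_simp
    ring
  · -- covariance of hatTau and hatDeltaW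
    intro j
    have hmain : ∫ ω, (E.hatTau Y1 Y0 ω - E.tau Y1 Y0) * E.hatDeltaW W ω j ∂E.P
        = ∑ k, E.Pi k ^ 2 * (E.lam .t1 .samp k * E.covK Y1 (fun i => W i j) k
            - E.lam .t0 .samp k * E.covK Y0 (fun i => W i j) k) := by
      have hfun : (fun ω => (E.hatTau Y1 Y0 ω - E.tau Y1 Y0) * E.hatDeltaW W ω j)
          =ᵐ[E.P] fun ω =>
            (∑ k, E.Pi k * ((E.mA .t1 Y1 k ω - E.meanK Y1 k)
              - (E.mA .t0 Y0 k ω - E.meanK Y0 k)))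
            * (∑ l, E.Pi l * (E.mA .samp (fun i => W i j) l ω
                - E.meanK (fun i => W i j) l)) :=
        Filter.Eventually.of_forall fun ω => by simp only [hdiffT, hdiffW]; try ring
      rw [integral_congr_ae hfun]
      exact E.key_cov hcard
        (fun k ω => (E.mA .t1 Y1 k ω - E.meanK Y1 k) - (E.mA .t0 Y0 k ω - E.meanK Y0 k))
        (fun l ω => E.mA .samp (fun i => W i j) l ω - E.meanK (fun i => W i j) l)
        (fun k => E.lam .t1 .samp k * E.covK Y1 (fun i => W i j) k
          - E.lam .t0 .samp k * E.covK Y0 (fun i => W i j) k)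
        (fun k l => E.sum_DS hlo hhi hsub Y1 Y0 (fun i => W i j) k l)
    rw [hmain]
    unfold SRSE.VtW
    rw [Finset.mul_sum]
    refine Finset.sum_congr rfl fun k _ => ?_
    rw [E.covK_sub_right (fun i => W i j) Y1 Y0 k,
      E.covK_symm (fun i => W i j) Y1 k, E.covK_symm (fun i => W i j) Y0 k]
    have h1 := hA k; have h2 := hB k; have h4 := hD k; have h5 := hnn k
    have h6 := hAB k
    simp only [SRSE.lam, SRSE.ac, SRSE.ad, SRSE.pik, SRSE.e1, SRSE.e0, SRSE.fk]
    rw [hABC k]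
    field_simp
  · -- covariance matrix of hatTauX
    intro j j'
    have hmain : ∫ ω, E.hatTauX X ω j * E.hatTauX X ω j' ∂E.P
        = ∑ k, E.Pi k ^ 2
            * (E.lam .t1 .t1 k * E.covK (fun i => X i j) (fun i => X i j') k
              - E.lam .t1 .t0 k * E.covK (fun i => X i j) (fun i => X i j') k
              - E.lam .t0 .t1 k * E.covK (fun i => X i j) (fun i => X i j') k
              + E.lam .t0 .t0 k * E.covK (fun i => X i j) (fun i => X i j') k) := by
      have hfun : (fun ω => E.hatTauX X ω j * E.hatTauX X ω j')
          =ᵐ[E.P] fun ω =>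
            (∑ k, E.Pi k * ((E.mA .t1 (fun i => X i j) k ω - E.meanK (fun i => X i j) k)
              - (E.mA .t0 (fun i => X i j) k ω - E.meanK (fun i => X i j) k)))
            * (∑ l, E.Pi l * ((E.mA .t1 (fun i => X i j') l ω - E.meanK (fun i => X i j') l)
              - (E.mA .t0 (fun i => X i j') l ω - E.meanK (fun i => X i j') l))) :=
        Filter.Eventually.of_forall fun ω => by simp only [hdiffX]; try ring
      rw [integral_congr_ae hfun]
      exact E.key_cov hcard
        (fun k ω => (E.mA .t1 (fun i => X i j) k ω - E.meanK (fun i => X i j) k)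
          - (E.mA .t0 (fun i => X i j) k ω - E.meanK (fun i => X i j) k))
        (fun l ω => (E.mA .t1 (fun i => X i j') l ω - E.meanK (fun i => X i j') l)
          - (E.mA .t0 (fun i => X i j') l ω - E.meanK (fun i => X i j') l))
        (fun k => E.lam .t1 .t1 k * E.covK (fun i => X i j) (fun i => X i j') k
          - E.lam .t1 .t0 k * E.covK (fun i => X i j) (fun i => X i j') k
          - E.lam .t0 .t1 k * E.covK (fun i => X i j) (fun i => X i j') k
          + E.lam .t0 .t0 k * E.covK (fun i => X i j) (fun i => X i j') k)
        (fun k l => E.sum_DD hlo hhi hsub (fun i => X i j) (fun i => X i j)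
          (fun i => X i j') (fun i => X i j') k l)
    have hV : E.VXX X j j' = ∑ k, (E.Pi k) ^ 2 / E.pik k
        * (E.covK (fun i => X i j) (fun i => X i j') k / (E.e1 k * E.e0 k)) := rfl
    rw [hmain, hV, Finset.mul_sum]
    refine Finset.sum_congr rfl fun k _ => ?_
    have h1 := hA k; have h2 := hB k; have h4 := hD k; have h5 := hnn k
    have h6 := hAB k
    simp only [SRSE.lam, SRSE.ac, SRSE.ad, SRSE.pik, SRSE.e1, SRSE.e0, SRSE.fk]
    rw [hABC k]
    field_simp
    ring
  · -- hatTauX and hatDeltaW are uncorrelated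
    intro j j'
    have hmain : ∫ ω, E.hatTauX X ω j * E.hatDeltaW W ω j' ∂E.P
        = ∑ k, E.Pi k ^ 2
            * (E.lam .t1 .samp k * E.covK (fun i => X i j) (fun i => W i j') k
              - E.lam .t0 .samp k * E.covK (fun i => X i j) (fun i => W i j') k) := by
      have hfun : (fun ω => E.hatTauX X ω j * E.hatDeltaW W ω j')
          =ᵐ[E.P] fun ω =>
            (∑ k, E.Pi k * ((E.mA .t1 (fun i => X i j) k ω - E.meanK (fun i => X i j) k)
              - (E.mA .t0 (fun i => X i j) k ω - E.meanK (fun i => X i j) k)))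
            * (∑ l, E.Pi l * (E.mA .samp (fun i => W i j') l ω
                - E.meanK (fun i => W i j') l)) :=
        Filter.Eventually.of_forall fun ω => by simp only [hdiffX, hdiffW]; try ring
      rw [integral_congr_ae hfun]
      exact E.key_cov hcard
        (fun k ω => (E.mA .t1 (fun i => X i j) k ω - E.meanK (fun i => X i j) k)
          - (E.mA .t0 (fun i => X i j) k ω - E.meanK (fun i => X i j) k))
        (fun l ω => E.mA .samp (fun i => W i j') l ω - E.meanK (fun i => W i j') l)
        (fun k => E.lam .t1 .samp k * E.covK (fun i => X i j) (fun i => W i j') k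
          - E.lam .t0 .samp k * E.covK (fun i => X i j) (fun i => W i j') k)
        (fun k l => E.sum_DS hlo hhi hsub (fun i => X i j) (fun i => X i j)
          (fun i => W i j') k l)
    rw [hmain]
    rw [Finset.mul_sum]
    apply Finset.sum_eq_zero
    intro k _
    have h1 := hA k; have h2 := hB k; have h3 := hCn k; have h4 := hD k
    have hll : E.lam .t1 .samp k = E.lam .t0 .samp k := by
      simp only [SRSE.lam, SRSE.ac, SRSE.ad]
      field_simp
    rw [hll]
    ring
  · -- covariance matrix of hatDeltaW
    intro j j'
    have hmain : ∫ ω, E.hatDeltaW W ω j * E.hatDeltaW W ω j' ∂E.P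
        = ∑ k, E.Pi k ^ 2
            * (E.lam .samp .samp k * E.covK (fun i => W i j) (fun i => W i j') k) := by
      have hfun : (fun ω => E.hatDeltaW W ω j * E.hatDeltaW W ω j')
          =ᵐ[E.P] fun ω =>
            (∑ k, E.Pi k * (E.mA .samp (fun i => W i j) k ω - E.meanK (fun i => W i j) k))
            * (∑ l, E.Pi l * (E.mA .samp (fun i => W i j') l ω
                - E.meanK (fun i => W i j') l)) :=
        Filter.Eventually.of_forall fun ω => by simp only [hdiffW]; try ring
      rw [integral_congr_ae hfun]
      exact E.key_cov hcard
        (fun k ω => E.mA .samp (fun i => W i j) k ω - E.meanK (fun i => W i j) k)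
        (fun l ω => E.mA .samp (fun i => W i j') l ω - E.meanK (fun i => W i j') l)
        (fun k => E.lam .samp .samp k * E.covK (fun i => W i j) (fun i => W i j') k)
        (fun k l => E.sum_cen_mul hlo hhi hsub .samp .samp (fun i => W i j)
          (fun i => W i j') k l)
    have hV : E.VWW W j j' = ∑ k, (E.Pi k) ^ 2 / E.pik k
        * ((1 - E.fk k) * E.covK (fun i => W i j) (fun i => W i j') k) := rfl
    rw [hmain, hV, Finset.mul_sum]
    refine Finset.sum_congr rfl fun k _ => ?_
    have h3 := hCn k; have h4 := hD k; have h5 := hnn k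
    simp only [SRSE.lam, SRSE.ac, SRSE.ad, SRSE.pik, SRSE.fk]
    field_simp
end SurveyExperiments
end
end

section
/- (Theorem 2(i)) Fix K≥1, stratum weights Π_{[k]}>0 with Σ_kΠ_{[k]}=1, treated proportions e_{[k]1}∈(0,1) with e_{[k]0}=1−e_{[k]1}, nonnegative reals S²_{[k]1}, S²_{[k]0}, S²_{[k]τ} with e_{[k]1}^{-1}S²_{[k]1}+e_{[k]0}^{-1}S²_{[k]0}>0 for every k, and a total sampling proportion f>0. For stratum sampling proportions f_{[k]}>0 satisfying Σ_kΠ_{[k]}f_{[k]}=f, define V_{ττ}({f_{[k]}}) = Σ_k (fΠ_{[k]}/f_{[k]})(e_{[k]1}^{-1}S²_{[k]1}+e_{[k]0}^{-1}S²_{[k]0}) − fΣ_kΠ_{[k]}S²_{[k]τ}. Then V_{ττ}({f_{[k]}}) ≥ [Σ_kΠ_{[k]}√(e_{[k]1}^{-1}S²_{[k]1}+e_{[k]0}^{-1}S²_{[k]0})]² − fΣ_kΠ_{[k]}S²_{[k]τ}, with equality if and only if f_{[k]} = f·√(e_{[k]1}^{-1}S²_{[k]1}+e_{[k]0}^{-1}S²_{[k]0})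 / Σ_{k'}Π_{[k']}√(e_{[k']1}^{-1}S²_{[k']1}+e_{[k']0}^{-1}S²_{[k']0}) for every k; i.e., this choice of stratum-specific sampling proportions minimizes the asymptotic variance of the stratified difference-in-means estimator. -/
open MeasureTheory ProbabilityTheory Filter Matrix
open scoped ENNReal NNReal

noncomputable section

namespace SurveyExperiments

/-! Weighted Cauchy–Schwarz with weights `Π_[k]`: since `∑ₖ Π_[k] f_[k] = f`, the gap
`V_ττ − bound` is `f ∑ₖ Π_[k] g_k / f_[k] − (∑ₖ Π_[k] √g_k)²`, which equals
`f ∑ₖ Π_[k] (√g_k − c f_[k])² / f_[k]` for `c = (∑ₖ Π_[k] √g_k) / f`. So the gap is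
nonnegative and vanishes exactly when `f_[k] = √g_k / c` for every `k`. -/

section WeightedCauchySchwarz

open Finset

variable {ι : Type*} (s : Finset ι) (w a x : ι → ℝ)

theorem sum_mul_sub_mul_sq_div (hx : ∀ k ∈ s, x k ≠ 0) (c : ℝ) :
    ∑ k ∈ s, w k * (a k - c * x k) ^ 2 / x k =
      ∑ k ∈ s, w k * a k ^ 2 / x k - 2 * c * ∑ k ∈ s, w k * a k +
        c ^ 2 * ∑ k ∈ s, w k * x k := by
  simp only [Finset.mul_sum, ← sum_sub_distrib, ← sum_add_distrib]
  refine sum_congr rfl fun k hk => ?_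
  field_simp [hx k hk]
  ring

theorem mul_sum_sq_div_sub_sq_sum (hx : ∀ k ∈ s, x k ≠ 0) (hX : ∑ k ∈ s, w k * x k ≠ 0) :
    (∑ k ∈ s, w k * x k) * ∑ k ∈ s, w k * a k ^ 2 / x k - (∑ k ∈ s, w k * a k) ^ 2 =
      (∑ k ∈ s, w k * x k) * ∑ k ∈ s,
        w k * (a k - (∑ j ∈ s, w j * a j) / (∑ j ∈ s, w j * x j) * x k) ^ 2 / x k := by
  rw [sum_mul_sub_mul_sq_div s w a x hx]
  field_simp
  ring

variable {s w x}

theorem sq_sum_mul_le_sum_mul_mul_sum_sq_div (hw : ∀ k ∈ s, 0 < w k)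
    (hx : ∀ k ∈ s, 0 < x k) :
    (∑ k ∈ s, w k * a k) ^ 2 ≤ (∑ k ∈ s, w k * x k) * ∑ k ∈ s, w k * a k ^ 2 / x k := by
  rcases s.eq_empty_or_nonempty with rfl | hs
  · simp
  have hX : 0 < ∑ k ∈ s, w k * x k := sum_pos (fun k hk => mul_pos (hw k hk) (hx k hk)) hs
  have hdefect := mul_sum_sq_div_sub_sq_sum s w a x (fun k hk => (hx k hk).ne') hX.ne'
  have hdev : 0 ≤ ∑ k ∈ s,
      w k * (a k - (∑ j ∈ s, w j * a j) / (∑ j ∈ s, w j * x j) * x k) ^ 2 / x k :=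
    sum_nonneg fun k hk => div_nonneg (mul_nonneg (hw k hk).le (sq_nonneg _)) (hx k hk).le
  nlinarith

theorem sum_mul_mul_sum_sq_div_eq_sq_sum_iff (hw : ∀ k ∈ s, 0 < w k)
    (hx : ∀ k ∈ s, 0 < x k) :
    (∑ k ∈ s, w k * x k) * ∑ k ∈ s, w k * a k ^ 2 / x k = (∑ k ∈ s, w k * a k) ^ 2 ↔
      ∀ k ∈ s, a k * ∑ j ∈ s, w j * x j = (∑ j ∈ s, w j * a j) * x k := by
  rcases s.eq_empty_or_nonempty with rfl | hs
  · simp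
  set X := ∑ k ∈ s, w k * x k
  set A := ∑ k ∈ s, w k * a k
  have hX : 0 < X := sum_pos (fun k hk => mul_pos (hw k hk) (hx k hk)) hs
  have hdev : ∀ k ∈ s, 0 ≤ w k * (a k - A / X * x k) ^ 2 / x k := fun k hk =>
    div_nonneg (mul_nonneg (hw k hk).le (sq_nonneg _)) (hx k hk).le
  rw [← sub_eq_zero, mul_sum_sq_div_sub_sq_sum s w a x (fun k hk => (hx k hk).ne') hX.ne',
    mul_eq_zero, or_iff_right hX.ne', sum_eq_zero_iff_of_nonneg hdev]
  refine forall₂_congr fun k hk => ?_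
  rw [div_eq_zero_iff, or_iff_left (hx k hk).ne', mul_eq_zero, or_iff_right (hw k hk).ne',
    sq_eq_zero_iff, sub_eq_zero, div_mul_eq_mul_div, eq_div_iff hX.ne']

end WeightedCauchySchwarz

theorem statement5_general (K : ℕ)
    (Pi e1 S1sq S0sq Stsq fk : Fin K → ℝ) (f : ℝ)
    (hPi : ∀ k, 0 < Pi k)
    (hpos : ∀ k, 0 < S1sq k / e1 k + S0sq k / (1 - e1 k))
    (hfk : ∀ k, 0 < fk k) (hbudget : ∑ k, Pi k * fk k = f) :
    let g : Fin K → ℝ := fun k => S1sq k / e1 k + S0sq k / (1 - e1 k)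
    let V : ℝ := (∑ k, f * Pi k / fk k * g k) - f * ∑ k, Pi k * Stsq k
    let bound : ℝ := (∑ k, Pi k * Real.sqrt (g k)) ^ 2 - f * ∑ k, Pi k * Stsq k
    bound ≤ V ∧
      (V = bound ↔ ∀ k, fk k = f * Real.sqrt (g k) / ∑ k', Pi k' * Real.sqrt (g k')) := by
  intro g V bound
  have hV : V = f * ∑ k, Pi k * Real.sqrt (g k) ^ 2 / fk k - f * ∑ k, Pi k * Stsq k := by
    simp only [V, Finset.mul_sum]
    congr 1
    exact Finset.sum_congr rfl fun k _ => by rw [Real.sq_sqrt (hpos k).le]; ring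
  have hle := sq_sum_mul_le_sum_mul_mul_sum_sq_div (s := Finset.univ) (fun k => Real.sqrt (g k))
    (fun k _ => hPi k) (fun k _ => hfk k)
  have heq := sum_mul_mul_sum_sq_div_eq_sq_sum_iff (s := Finset.univ) (fun k => Real.sqrt (g k))
    (fun k _ => hPi k) (fun k _ => hfk k)
  rw [hbudget] at hle heq
  refine ⟨by linarith, ?_⟩
  rw [hV, show bound = (∑ k, Pi k * Real.sqrt (g k)) ^ 2 - f * ∑ k, Pi k * Stsq k from rfl,
    sub_left_inj, heq]
  simp only [Finset.mem_univ, forall_const]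
  refine forall_congr' fun k => ?_
  have hS : 0 < ∑ j, Pi j * Real.sqrt (g j) :=
    Finset.sum_pos (fun j _ => mul_pos (hPi j) (Real.sqrt_pos.2 (hpos j))) ⟨k, Finset.mem_univ k⟩
  rw [eq_div_iff hS.ne']
  constructor <;> intro h <;> linarith

/-- Theorem 2(i): given the treated proportions and the total sampling
proportion `f`, the asymptotic variance `V_ττ` over stratum sampling proportions `f_[k]`
subject to the budget constraint `∑ₖ Π_[k] f_[k] = f` is bounded below by
`(∑ₖ Π_[k] √(S²_[k]1/e_[k]1 + S²_[k]0/e_[k]0))² - f ∑ₖ Π_[k] S²_[k]τ`, with equality iff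
`f_[k] ∝ √(S²_[k]1/e_[k]1 + S²_[k]0/e_[k]0)`. -/
theorem statement5 (K : ℕ) (hK : 1 ≤ K)
    (Pi e1 S1sq S0sq Stsq fk : Fin K → ℝ) (f : ℝ)
    (hPi : ∀ k, 0 < Pi k) (hPisum : ∑ k, Pi k = 1)
    (he : ∀ k, 0 < e1 k ∧ e1 k < 1)
    (hS1 : ∀ k, 0 ≤ S1sq k) (hS0 : ∀ k, 0 ≤ S0sq k) (hSt : ∀ k, 0 ≤ Stsq k)
    (hpos : ∀ k, 0 < S1sq k / e1 k + S0sq k / (1 - e1 k))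
    (hf : 0 < f) (hfk : ∀ k, 0 < fk k) (hbudget : ∑ k, Pi k * fk k = f) :
    let g : Fin K → ℝ := fun k => S1sq k / e1 k + S0sq k / (1 - e1 k)
    let V : ℝ := (∑ k, f * Pi k / fk k * g k) - f * ∑ k, Pi k * Stsq k
    let bound : ℝ := (∑ k, Pi k * Real.sqrt (g k)) ^ 2 - f * ∑ k, Pi k * Stsq k
    bound ≤ V ∧
      (V = bound ↔ ∀ k, fk k = f * Real.sqrt (g k) / ∑ k', Pi k' * Real.sqrt (g k')) :=
  statement5_general K Pi e1 S1sq S0sq Stsq fk f hPi hpos hfk hbudget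

end SurveyExperiments
end
end

section
/- (Theorem 2(ii)) For nonnegative reals S²_{[k]1}, S²_{[k]0} with S²_{[k]1}+S²_{[k]0}>0 and for every e_{[k]1}∈(0,1) with e_{[k]0}=1−e_{[k]1}: e_{[k]1}^{-1}S²_{[k]1} + e_{[k]0}^{-1}S²_{[k]0} ≥ (√(S²_{[k]1}) + √(S²_{[k]0}))², with equality if and only if e_{[k]1} = √(S²_{[k]1})/(√(S²_{[k]1})+√(S²_{[k]0})). Consequently, for given stratum sampling proportions f_{[k]}, the asymptotic variance V_{ττ} = Σ_k (fΠ_{[k]}/f_{[k]})(e_{[k]1}^{-1}S²_{[k]1}+e_{[k]0}^{-1}S²_{[k]0}) − fΣ_kΠ_{[k]}S²_{[k]τ} of the stratified difference-in-means estimator is minimized over the treated proportions (e_{[k]1})_{k=1}^K ∈ (0,1)^K exactly at e_{[k]1} = √(S²_{[k]1})/(√(S²_{[k]1})+√(S²_{[k]0})) for every k. -/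
open MeasureTheory ProbabilityTheory Filter Matrix
open scoped ENNReal NNReal

noncomputable section

/-!
For `0 < e < 1` one has the identity
`a² / e + b² / (1 - e) = (a + b)² + ((1 - e) a - e b)² / (e (1 - e))`,
so the left side is at least `(a + b)²`, with equality exactly when `e = a / (a + b)`.
Applied with `a = √S²₁`, `b = √S²₀` in every stratum, and since `V_ττ` is a positively weighted
sum of these per-stratum terms plus a constant, the minimizer of `V_ττ` is the vector of
per-stratum minimizers.
-/

lemma sq_div_add_sq_div_one_sub (a b : ℝ) {e : ℝ} (he0 : e ≠ 0) (he1 : e ≠ 1) :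
    a ^ 2 / e + b ^ 2 / (1 - e) = (a + b) ^ 2 + ((1 - e) * a - e * b) ^ 2 / (e * (1 - e)) := by
  have : 1 - e ≠ 0 := sub_ne_zero.mpr (Ne.symm he1)
  field_simp
  ring

lemma add_sq_le_sq_div_add_sq_div (a b : ℝ) {e : ℝ} (he0 : 0 < e) (he1 : e < 1) :
    (a + b) ^ 2 ≤ a ^ 2 / e + b ^ 2 / (1 - e) := by
  rw [sq_div_add_sq_div_one_sub a b he0.ne' he1.ne]
  have : 0 < 1 - e := sub_pos.mpr he1
  have : 0 ≤ ((1 - e) * a - e * b) ^ 2 / (e * (1 - e)) := by positivity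
  linarith

lemma sq_div_add_sq_div_one_sub_eq_add_sq_iff {a b e : ℝ} (hab : a + b ≠ 0)
    (he0 : 0 < e) (he1 : e < 1) :
    a ^ 2 / e + b ^ 2 / (1 - e) = (a + b) ^ 2 ↔ e = a / (a + b) := by
  have : 0 < 1 - e := sub_pos.mpr he1
  rw [sq_div_add_sq_div_one_sub a b he0.ne' he1.ne, add_eq_left, div_eq_zero_iff,
    or_iff_left (by positivity), sq_eq_zero_iff, eq_div_iff hab]
  constructor <;> intro h <;> linarith

/-- Valid also for `x = 0` or `s = 0` through `y / 0 = 0`; this matters because the optimal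
proportion `√S²₁ / (√S²₁ + √S²₀)` is `0` or `1` when one of the variances vanishes. -/
lemma sq_div_div_self (x s : ℝ) : x ^ 2 / (x / s) = x * s := by
  rcases eq_or_ne x 0 with rfl | hx
  · simp
  rcases eq_or_ne s 0 with rfl | hs
  · simp
  field_simp

lemma sq_div_add_sq_div_one_sub_at_ratio {a b : ℝ} (hab : a + b ≠ 0) :
    a ^ 2 / (a / (a + b)) + b ^ 2 / (1 - a / (a + b)) = (a + b) ^ 2 := by
  have : 1 - a / (a + b) = b / (a + b) := by field_simp; ring
  rw [this, sq_div_div_self, sq_div_div_self]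
  ring

lemma Real.sqrt_add_sqrt_pos {A B : ℝ} (h : 0 < A + B) : 0 < √A + √B := by
  have hA := Real.sqrt_nonneg A
  have hB := Real.sqrt_nonneg B
  by_contra! hle
  have hA0 := Real.sqrt_eq_zero'.mp (by linarith : √A = 0)
  have hB0 := Real.sqrt_eq_zero'.mp (by linarith : √B = 0)
  linarith

section SqrtForm

variable {A B e : ℝ} (hA : 0 ≤ A) (hB : 0 ≤ B)
include hA hB

lemma sqrt_add_sqrt_sq_le_div_add_div (he0 : 0 < e) (he1 : e < 1) :
    (√A + √B) ^ 2 ≤ A / e + B / (1 - e) := by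
  simpa only [Real.sq_sqrt hA, Real.sq_sqrt hB] using add_sq_le_sq_div_add_sq_div √A √B he0 he1

lemma div_add_div_one_sub_eq_sqrt_add_sqrt_sq_iff (hAB : 0 < A + B) (he0 : 0 < e) (he1 : e < 1) :
    A / e + B / (1 - e) = (√A + √B) ^ 2 ↔ e = √A / (√A + √B) := by
  simpa only [Real.sq_sqrt hA, Real.sq_sqrt hB] using
    sq_div_add_sq_div_one_sub_eq_add_sq_iff (Real.sqrt_add_sqrt_pos hAB).ne' he0 he1

lemma div_add_div_one_sub_at_sqrt_ratio (hAB : 0 < A + B) :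
    A / (√A / (√A + √B)) + B / (1 - √A / (√A + √B)) = (√A + √B) ^ 2 := by
  simpa only [Real.sq_sqrt hA, Real.sq_sqrt hB] using
    sq_div_add_sq_div_one_sub_at_ratio (Real.sqrt_add_sqrt_pos hAB).ne'

end SqrtForm

lemma Finset.sum_mul_eq_sum_mul_iff_of_le {ι : Type*} [Fintype ι] {c u v : ι → ℝ}
    (hc : ∀ i, 0 < c i) (huv : ∀ i, u i ≤ v i) :
    ∑ i, c i * u i = ∑ i, c i * v i ↔ u = v := by
  rw [Finset.sum_eq_sum_iff_of_le fun i _ => mul_le_mul_of_nonneg_left (huv i) (hc i).le,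
    funext_iff]
  simp only [Finset.mem_univ, true_implies, mul_right_inj' (hc _).ne']

namespace SurveyExperiments

/-- Theorem 2(ii): the pointwise inequality
`S²1/e + S²0/(1-e) ≥ (√S²1 + √S²0)²` for `e ∈ (0,1)`, with equality iff
`e = √S²1/(√S²1 + √S²0)`; consequently, for given stratum sampling proportions, the
asymptotic variance `V_ττ` is minimized over treated proportions `(e_[k]1) ∈ (0,1)^K`
exactly at `e_[k]1 = √(S²_[k]1)/(√(S²_[k]1) + √(S²_[k]0))`. -/
theorem statement6 (K : ℕ) (Pi fk Stsq S1sq S0sq : Fin K → ℝ) (f : ℝ)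
    (hPi : ∀ k, 0 < Pi k) (hfk : ∀ k, 0 < fk k) (hf : 0 < f)
    (hS1 : ∀ k, 0 ≤ S1sq k) (hS0 : ∀ k, 0 ≤ S0sq k) (hpos : ∀ k, 0 < S1sq k + S0sq k) :
    (∀ A B e : ℝ, 0 ≤ A → 0 ≤ B → 0 < A + B → 0 < e → e < 1 →
      ((Real.sqrt A + Real.sqrt B) ^ 2 ≤ A / e + B / (1 - e) ∧
        (A / e + B / (1 - e) = (Real.sqrt A + Real.sqrt B) ^ 2 ↔
          e = Real.sqrt A / (Real.sqrt A + Real.sqrt B)))) ∧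
    (let estar : Fin K → ℝ := fun k =>
        Real.sqrt (S1sq k) / (Real.sqrt (S1sq k) + Real.sqrt (S0sq k))
     let V : (Fin K → ℝ) → ℝ := fun e =>
        (∑ k, f * Pi k / fk k * (S1sq k / e k + S0sq k / (1 - e k))) -
          f * ∑ k, Pi k * Stsq k
     ∀ e : Fin K → ℝ, (∀ k, 0 < e k ∧ e k < 1) →
        (V estar ≤ V e ∧ (V e = V estar ↔ e = estar))) := by
  refine ⟨fun A B e hA hB hAB he0 he1 => ⟨sqrt_add_sqrt_sq_le_div_add_div hA hB he0 he1,
    div_add_div_one_sub_eq_sqrt_add_sqrt_sq_iff hA hB hAB he0 he1⟩, ?_⟩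
  intro estar V e he
  have hweight : ∀ k, 0 < f * Pi k / fk k := fun k => by have := hPi k; have := hfk k; positivity
  have hmin : ∀ k, S1sq k / estar k + S0sq k / (1 - estar k) = (√(S1sq k) + √(S0sq k)) ^ 2 :=
    fun k => div_add_div_one_sub_at_sqrt_ratio (hS1 k) (hS0 k) (hpos k)
  have hle : ∀ k, S1sq k / estar k + S0sq k / (1 - estar k) ≤ S1sq k / e k + S0sq k / (1 - e k) :=
    fun k => (hmin k).trans_le (sqrt_add_sqrt_sq_le_div_add_div (hS1 k) (hS0 k) (he k).1 (he k).2)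
  refine ⟨sub_le_sub_right (Finset.sum_le_sum fun k _ =>
    mul_le_mul_of_nonneg_left (hle k) (hweight k).le) _, ?_⟩
  rw [eq_comm, sub_left_inj, Finset.sum_mul_eq_sum_mul_iff_of_le hweight hle, eq_comm, funext_iff,
    funext_iff]
  refine forall_congr' fun k => ?_
  rw [hmin, div_add_div_one_sub_eq_sqrt_add_sqrt_sq_iff (hS1 k) (hS0 k) (hpos k) (he k).1 (he k).2]

end SurveyExperiments
end
end
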